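/- arXiv:2101.06180 — 9 statements merged into one kernel-verified Lean document; each statement's English description precedes it below -/
import Mathlib

section
/- For every finite simple graph G, the minimum rank of G over F₂ is at most the subgraph complementation number of G: mr(G, F₂) ≤ c₂(G). -/
open Matrix

/-- A subgraph complementation system for `G`: a finite collection (multiset) of subsets of
vertices such that two distinct vertices are adjacent iff they lie together in an odd
number of the sets. -/
def IsSCS {V : Type*} [DecidableEq V] (G : SimpleGraph V) (𝒞 : Multiset (Finset V)) : Prop :=
  ∀ u v : V, u ≠ v →
    (G.Adj u v ↔ Odd (Multiset.card (𝒞.filter (fun C => u ∈ C ∧ v ∈ C))))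

/-- The subgraph complementation number `c₂(G)`: the minimum cardinality of a subgraph
complementation system for `G`. -/
noncomputable def c2 {V : Type*} [DecidableEq V] (G : SimpleGraph V) : ℕ :=
  sInf {k | ∃ 𝒞 : Multiset (Finset V), IsSCS G 𝒞 ∧ Multiset.card 𝒞 = k}

/-- A symmetric matrix over `F₂` fits `G` if its off-diagonal entries record adjacency. -/
def FitsF2 {V : Type*} (G : SimpleGraph V) (A : Matrix V V (ZMod 2)) : Prop :=
  A.IsSymm ∧ ∀ u v : V, u ≠ v → (A u v = 1 ↔ G.Adj u v)

/-- The minimum rank of `G` over `F₂`: the minimum rank of a symmetric matrix over `F₂`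
that fits `G`. -/
noncomputable def mrF2 {V : Type*} [Fintype V] (G : SimpleGraph V) : ℕ :=
  sInf {k | ∃ A : Matrix V V (ZMod 2), FitsF2 G A ∧ A.rank = k}

lemma zmod2_cast_eq_one (n : ℕ) : ((n : ZMod 2) = 1) ↔ Odd n := by
  rw [Nat.odd_iff, ← ZMod.natCast_mod n 2]
  rcases Nat.mod_two_eq_zero_or_one n with h | h <;> rw [h] <;> simp

lemma rank_vecMulVec_le_one {V : Type*} [Fintype V] (w v : V → ZMod 2) :
    (vecMulVec w v).rank ≤ 1 := by
  rw [vecMulVec_eq Unit]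
  exact le_trans (rank_mul_le_right _ _) (le_trans (rank_le_card_height _) (by simp))

lemma rank_add_le' {V : Type*} [Fintype V] (A B : Matrix V V (ZMod 2)) :
    (A + B).rank ≤ A.rank + B.rank := by
  unfold Matrix.rank
  have h1 : LinearMap.range (A + B).mulVecLin ≤
      LinearMap.range A.mulVecLin ⊔ LinearMap.range B.mulVecLin := by
    rintro x ⟨y, rfl⟩
    simp only [mulVecLin_add, LinearMap.add_apply]
    exact Submodule.add_mem_sup ⟨y, rfl⟩ ⟨y, rfl⟩
  have h2 := Submodule.finrank_sup_add_finrank_inf_eq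
    (LinearMap.range A.mulVecLin) (LinearMap.range B.mulVecLin)
  have h3 := Submodule.finrank_mono h1
  omega

lemma rank_multiset_sum_le {V : Type*} [Fintype V] (s : Multiset (Matrix V V (ZMod 2)))
    (h : ∀ M ∈ s, M.rank ≤ 1) : s.sum.rank ≤ Multiset.card s := by
  induction s using Multiset.induction with
  | empty => simp [Matrix.rank_zero]
  | cons M s ih =>
    rw [Multiset.sum_cons, Multiset.card_cons]
    calc (M + s.sum).rank ≤ M.rank + s.sum.rank := rank_add_le' _ _
      _ ≤ 1 + Multiset.card s := by
          exact add_le_add (h M (Multiset.mem_cons_self _ _))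
            (ih fun N hN => h N (Multiset.mem_cons_of_mem hN))
      _ = Multiset.card s + 1 := by omega

/-- indicator vector of a finset -/
def indF2 {V : Type*} [DecidableEq V] (C : Finset V) : V → ZMod 2 :=
  fun x => if x ∈ C then 1 else 0

lemma entry_eq {V : Type*} [Fintype V] [DecidableEq V] (𝒞 : Multiset (Finset V)) (u v : V) :
    ((𝒞.map (fun C => vecMulVec (indF2 C) (indF2 C))).sum) u v =
      ((Multiset.card (𝒞.filter (fun C => u ∈ C ∧ v ∈ C)) : ℕ) : ZMod 2) := by
  induction 𝒞 using Multiset.induction with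
  | empty => simp
  | cons C s ih =>
    rw [Multiset.map_cons, Multiset.sum_cons, Multiset.filter_cons]
    by_cases h : u ∈ C ∧ v ∈ C
    · simp [h, Matrix.add_apply, vecMulVec_apply, indF2, h.1, h.2, ih, add_comm]
    · have h' : indF2 C u * indF2 C v = 0 := by
        unfold indF2
        rcases not_and_or.mp h with h1 | h1 <;> simp [h1]
      simp [h, Matrix.add_apply, vecMulVec_apply, h', ih]

/-- the finset of elements of a `Sym2` -/
def sym2Fin {V : Type*} [Fintype V] [DecidableEq V] (e : Sym2 V) : Finset V :=
  Finset.univ.filter (· ∈ e)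

@[simp] lemma mem_sym2Fin {V : Type*} [Fintype V] [DecidableEq V] {e : Sym2 V} {x : V} :
    x ∈ sym2Fin e ↔ x ∈ e := by simp [sym2Fin]

lemma scs_exists {V : Type*} [Fintype V] [DecidableEq V] (G : SimpleGraph V) :
    ∃ 𝒞 : Multiset (Finset V), IsSCS G 𝒞 := by
  classical
  refine ⟨G.edgeFinset.val.map sym2Fin, fun u v huv => ?_⟩
  have hfil : (Multiset.filter (fun C => u ∈ C ∧ v ∈ C)
      (G.edgeFinset.val.map sym2Fin)) =
      ((G.edgeFinset.val.filter (fun e => e = s(u, v))).map sym2Fin) := by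
    rw [Multiset.filter_map]
    congr 1
    apply Multiset.filter_congr
    intro e _
    simp only [Function.comp_apply, mem_sym2Fin]
    exact Sym2.mem_and_mem_iff huv
  rw [hfil, Multiset.card_map]
  have : (G.edgeFinset.val.filter (fun e => e = s(u, v))) =
      (G.edgeFinset.filter (fun e => e = s(u, v))).val := rfl
  rw [this]
  rw [Finset.filter_eq' G.edgeFinset (s(u, v))]
  by_cases hadj : G.Adj u v
  · have : s(u, v) ∈ G.edgeFinset := by simpa [SimpleGraph.mem_edgeFinset] using hadj
    simp [this, hadj]
  · have : s(u, v) ∉ G.edgeFinset := by simpa [SimpleGraph.mem_edgeFinset] using hadj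
    simp [this, hadj]

theorem stmt0 {V : Type*} [Fintype V] [DecidableEq V] (G : SimpleGraph V) :
    mrF2 G ≤ c2 G := by
  classical
  have hne : {k | ∃ 𝒞 : Multiset (Finset V), IsSCS G 𝒞 ∧ Multiset.card 𝒞 = k}.Nonempty := by
    obtain ⟨𝒞, h𝒞⟩ := scs_exists G
    exact ⟨Multiset.card 𝒞, 𝒞, h𝒞, rfl⟩
  obtain ⟨𝒞, h𝒞, hcard⟩ : c2 G ∈ {k | ∃ 𝒞 : Multiset (Finset V), IsSCS G 𝒞 ∧ Multiset.card 𝒞 = k} :=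
    Nat.sInf_mem hne
  set A : Matrix V V (ZMod 2) := (𝒞.map (fun C => vecMulVec (indF2 C) (indF2 C))).sum with hA
  have hentry : ∀ u v : V, A u v =
      ((Multiset.card (𝒞.filter (fun C => u ∈ C ∧ v ∈ C)) : ℕ) : ZMod 2) :=
    fun u v => entry_eq 𝒞 u v
  have hsymm : A.IsSymm := by
    ext u v
    rw [Matrix.transpose_apply, hentry, hentry]
    congr 2
    apply Multiset.filter_congr
    intro C _
    exact and_comm
  have hfits : FitsF2 G A := by
    refine ⟨hsymm, fun u v huv => ?_⟩
    rw [hentry, zmod2_cast_eq_one]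
    exact (h𝒞 u v huv).symm
  have hle : mrF2 G ≤ A.rank := Nat.sInf_le ⟨A, hfits, rfl⟩
  have hrank : A.rank ≤ c2 G := by
    rw [hA, ← hcard]
    calc ((𝒞.map (fun C => vecMulVec (indF2 C) (indF2 C))).sum).rank
        ≤ Multiset.card (𝒞.map (fun C => vecMulVec (indF2 C) (indF2 C))) := by
          apply rank_multiset_sum_le
          intro M hM
          obtain ⟨C, _, rfl⟩ := Multiset.mem_map.mp hM
          exact rank_vecMulVec_le_one _ _
      _ = Multiset.card 𝒞 := Multiset.card_map _ _
  exact le_trans hle hrank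
end

section
/- If G is a finite simple graph with m edges that is not a linear forest, then c₂(G) ≤ m − 1. -/
open Matrix

/-- A linear forest: an acyclic graph in which every vertex has degree at most 2,
i.e. every connected component is a path. -/
def IsLinearForest {V : Type*} (G : SimpleGraph V) : Prop :=
  G.IsAcyclic ∧ ∀ v : V, (G.neighborSet v).ncard ≤ 2


/-! A multiset `𝒞` of vertex sets determines the graph `parityGraph 𝒞` of pairs covered an odd
number of times, and adding multisets takes the symmetric difference of these graphs. So if a
subgraph `H ≤ G` is realised by `𝒞`, then `G` is realised by `𝒞` together with the remaining edges
of `G` as two-element sets, and it suffices to find a subgraph realised by fewer sets than it has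
edges. A graph that is not a linear forest contains a claw at `v` with leaves `a, b, c`, realised by
the two sets `{v, a, b, c}` and `{a, b, c}`, or a cycle `x v₁ ⋯ vₖ x`, realised by the `k - 1`
triangles `{x, vᵢ, vᵢ₊₁}`. -/

open scoped symmDiff

namespace SimpleGraph

variable {V : Type*}

theorem symmDiff_adj (G H : SimpleGraph V) (u v : V) :
    (G ∆ H).Adj u v ↔ Xor (G.Adj u v) (H.Adj u v) := by
  simp [symmDiff_def, Xor]

theorem fromEdgeSet_insert_of_notMem {u v : V} {s : Set (Sym2 V)} (h : s(u, v) ∉ s) :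
    fromEdgeSet (insert s(u, v) s) = edge u v ∆ fromEdgeSet s := by
  rw [Set.insert_eq, fromEdgeSet_union, edge, Disjoint.symmDiff_eq_sup]
  rw [fromEdgeSet_disjoint, edgeSet_fromEdgeSet]
  exact Set.disjoint_singleton_left.mpr h |>.mono_right Set.sdiff_subset

theorem Walk.IsTrail.ncard_edgeSet {G : SimpleGraph V} {a b : V} {p : G.Walk a b}
    (hp : p.IsTrail) : p.edgeSet.ncard = p.length := by
  classical
  rw [← Walk.coe_edges_toFinset, Set.ncard_coe_finset, List.toFinset_card_of_nodup hp.edges_nodup,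
    Walk.length_edges]

theorem Walk.IsCycle.exists_isPath_of_adj {G : SimpleGraph V} {x : V} {p : G.Walk x x}
    (hp : p.IsCycle) :
    ∃ a b, G.Adj x a ∧ G.Adj x b ∧ a ≠ b ∧ ∃ r : G.Walk a b, r.IsPath ∧ x ∉ r.support := by
  cases p with
  | nil => exact absurd hp Walk.not_isCycle_nil
  | cons h q =>
    have hq := ((Walk.cons_isCycle_iff q h).mp hp).1
    obtain ⟨b, h', r, hqr⟩ := Walk.exists_eq_cons_of_ne h.ne q.reverse
    have hr : (Walk.cons h' r).IsPath := hqr ▸ hq.reverse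
    rw [Walk.cons_isPath_iff] at hr
    refine ⟨b, _, h', h, ?_, r, hr⟩
    rintro rfl
    have hlen := congrArg Walk.length hqr
    have h3 := hp.three_le_length
    have hr0 : r.length = 0 := Walk.length_eq_zero_iff.mpr (Walk.isPath_iff_nil.mp hr.1)
    simp only [Walk.length_reverse, Walk.length_cons, hr0] at hlen h3
    omega

end SimpleGraph

open SimpleGraph

section ParityGraph

variable {V : Type*} [DecidableEq V]

@[simps]
def parityGraph (𝒞 : Multiset (Finset V)) : SimpleGraph V where
  Adj u v := u ≠ v ∧ Odd (Multiset.card (𝒞.filter (fun C => u ∈ C ∧ v ∈ C)))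
  symm := ⟨fun u v h => ⟨h.1.symm, by simpa only [and_comm] using h.2⟩⟩
  loopless := ⟨fun u h => h.1 rfl⟩

theorem isSCS_iff_parityGraph_eq {G : SimpleGraph V} {𝒞 : Multiset (Finset V)} :
    IsSCS G 𝒞 ↔ parityGraph 𝒞 = G := by
  simp only [IsSCS, SimpleGraph.ext_iff, funext_iff, eq_iff_iff, parityGraph_adj]
  refine forall₂_congr fun u v => ?_
  by_cases huv : u = v
  · simp [huv]
  · simp [huv, Iff.comm]

@[simp]
theorem parityGraph_zero : parityGraph (0 : Multiset (Finset V)) = ⊥ := by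
  ext; simp

theorem parityGraph_add (𝒞 𝒟 : Multiset (Finset V)) :
    parityGraph (𝒞 + 𝒟) = parityGraph 𝒞 ∆ parityGraph 𝒟 := by
  ext u v
  simp only [symmDiff_adj, parityGraph_adj, Multiset.filter_add, Multiset.card_add, Nat.odd_add,
    ← Nat.not_odd_iff_even, Xor]
  tauto

theorem parityGraph_singleton_adj (S : Finset V) {u v : V} :
    (parityGraph {S}).Adj u v ↔ u ≠ v ∧ u ∈ S ∧ v ∈ S := by
  simp only [parityGraph_adj, Multiset.filter_singleton]
  split_ifs with h <;> simp [h]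

theorem parityGraph_map_toFinset (s : Finset (Sym2 V)) :
    parityGraph (s.val.map Sym2.toFinset) = fromEdgeSet s := by
  ext u v
  simp only [parityGraph_adj, fromEdgeSet_adj, Multiset.filter_map, Multiset.card_map]
  by_cases huv : u = v
  · simp [huv]
  · simp only [Sym2.mem_toFinset, Function.comp_def, Sym2.mem_and_mem_iff huv, ne_eq, huv,
      not_false_eq_true, and_true, true_and]
    rw [Multiset.filter_eq', Multiset.card_replicate, Multiset.count_eq_of_nodup s.nodup]
    split_ifs with h <;> simpa using h

theorem c2_le_card {G : SimpleGraph V} {𝒞 : Multiset (Finset V)} (h : IsSCS G 𝒞) :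
    c2 G ≤ Multiset.card 𝒞 :=
  Nat.sInf_le ⟨𝒞, h, rfl⟩

theorem c2_le_card_add_of_le [Finite V] {G H : SimpleGraph V} {𝒞 : Multiset (Finset V)}
    (hHG : H ≤ G) (hH : IsSCS H 𝒞) :
    c2 G ≤ Multiset.card 𝒞 + (G.edgeSet.ncard - H.edgeSet.ncard) := by
  set s := (Set.toFinite (G \ H).edgeSet).toFinset
  have hG : IsSCS G (𝒞 + s.val.map Sym2.toFinset) := by
    rw [isSCS_iff_parityGraph_eq, parityGraph_add, parityGraph_map_toFinset,
      (isSCS_iff_parityGraph_eq).mp hH, Set.Finite.coe_toFinset, fromEdgeSet_edgeSet,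
      disjoint_sdiff_self_right.symmDiff_eq_sup, sup_sdiff_cancel_right hHG]
  have hs : s.card = G.edgeSet.ncard - H.edgeSet.ncard := by
    rw [← Set.ncard_eq_toFinset_card _ (Set.toFinite _), edgeSet_sdiff,
      Set.ncard_sdiff (edgeSet_mono hHG)]
  simpa [hs] using c2_le_card hG

theorem c2_le_ncard_edgeSet_sub_one_of_le [Finite V] {G H : SimpleGraph V} {𝒞 : Multiset (Finset V)}
    (hHG : H ≤ G) (hH : IsSCS H 𝒞) (hcard : Multiset.card 𝒞 < H.edgeSet.ncard) :
    c2 G ≤ G.edgeSet.ncard - 1 := by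
  have := c2_le_card_add_of_le hHG hH
  have := Set.ncard_le_ncard (edgeSet_mono hHG)
  omega

theorem parityGraph_insert_pair_adj {v : V} {T : Finset V} (hv : v ∉ T) {p q : V} :
    (parityGraph {insert v T, T}).Adj p q ↔ p = v ∧ q ∈ T ∨ q = v ∧ p ∈ T := by
  rw [Multiset.insert_eq_cons, ← Multiset.singleton_add, parityGraph_add, symmDiff_adj,
    parityGraph_singleton_adj, parityGraph_singleton_adj]
  simp only [Finset.mem_insert, Xor]
  grind

theorem c2_le_of_three_neighbors [Finite V] {G : SimpleGraph V} {v a b c : V}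
    (ha : G.Adj v a) (hb : G.Adj v b) (hc : G.Adj v c) (hab : a ≠ b) (hac : a ≠ c)
    (hbc : b ≠ c) : c2 G ≤ G.edgeSet.ncard - 1 := by
  have hv : v ∉ ({a, b, c} : Finset V) := by simp [ha.ne, hb.ne, hc.ne]
  have hT : ∀ z ∈ ({a, b, c} : Finset V), G.Adj v z := by simp [ha, hb, hc]
  refine c2_le_ncard_edgeSet_sub_one_of_le (H := parityGraph {insert v {a, b, c}, {a, b, c}})
    ?_ (isSCS_iff_parityGraph_eq.mpr rfl) ?_
  · intro p q h
    rw [parityGraph_insert_pair_adj hv] at h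
    rcases h with ⟨rfl, hq⟩ | ⟨rfl, hp⟩
    exacts [hT q hq, (hT p hp).symm]
  · rw [show Multiset.card {insert v {a, b, c}, ({a, b, c} : Finset V)} = 2 from rfl,
      Set.two_lt_ncard]
    have hstar : ∀ z ∈ ({a, b, c} : Finset V),
        s(v, z) ∈ (parityGraph {insert v {a, b, c}, {a, b, c}}).edgeSet :=
      fun z hz => (parityGraph_insert_pair_adj hv).mpr (.inl ⟨rfl, hz⟩)
    refine ⟨_, hstar a (by simp), _, hstar b (by simp), _, hstar c (by simp), ?_, ?_, ?_⟩ <;>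
      simp [hab, hac, hbc, ha.ne', hb.ne']

theorem parityGraph_triangle {x u v : V} (hxu : x ≠ u) (hxv : x ≠ v) (huv : u ≠ v) :
    parityGraph {{x, u, v}} = edge x u ∆ edge u v ∆ edge x v := by
  ext p q
  simp only [parityGraph_singleton_adj, symmDiff_adj, edge_adj, Finset.mem_insert,
    Finset.mem_singleton, Xor]
  grind

def fanSystem (x : V) {G : SimpleGraph V} {a b : V} (r : G.Walk a b) : Multiset (Finset V) :=
  r.edges.map fun e => insert x e.toFinset

theorem card_fanSystem (x : V) {G : SimpleGraph V} {a b : V} (r : G.Walk a b) :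
    Multiset.card (fanSystem x r) = r.length := by
  simp [fanSystem]

theorem parityGraph_fanSystem {G : SimpleGraph V} {x : V} :
    ∀ {a b : V} (r : G.Walk a b), r.IsPath → x ∉ r.support →
      parityGraph (fanSystem x r) = fromEdgeSet r.edgeSet ∆ (edge x a ∆ edge x b)
  | _, _, .nil, _, _ => by simp [fanSystem]
  | u, _, @Walk.cons _ _ _ v _ h q, hr, hx => by
    rw [Walk.cons_isPath_iff] at hr
    rw [Walk.support_cons, List.mem_cons, not_or] at hx
    have hfan : fanSystem x (.cons h q) = {{x, u, v}} + fanSystem x q := by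
      simp [fanSystem, Sym2.toFinset_mk_eq]
    have hxv : x ≠ v := fun hxv => hx.2 (hxv ▸ q.start_mem_support)
    have hnew : s(u, v) ∉ q.edgeSet := fun he => hr.2 (q.fst_mem_support_of_mem_edges he)
    rw [hfan, parityGraph_add, parityGraph_triangle hx.1 hxv h.ne,
      parityGraph_fanSystem q hr.1 hx.2, Walk.edgeSet_cons, fromEdgeSet_insert_of_notMem hnew]
    simp only [symmDiff_assoc, symmDiff_left_comm _ (edge x v), symmDiff_symmDiff_cancel_left]
    ac_rfl

theorem c2_le_of_path_between_neighbors [Finite V] {G : SimpleGraph V} {x a b : V}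
    (hxa : G.Adj x a) (hxb : G.Adj x b) (hab : a ≠ b) (r : G.Walk a b) (hr : r.IsPath)
    (hx : x ∉ r.support) : c2 G ≤ G.edgeSet.ncard - 1 := by
  have hH := parityGraph_fanSystem r hr hx
  refine c2_le_ncard_edgeSet_sub_one_of_le (H := parityGraph (fanSystem x r)) ?_
    (isSCS_iff_parityGraph_eq.mpr rfl) ?_
  · rw [hH]
    refine symmDiff_le_sup.trans (sup_le ?_ (symmDiff_le_sup.trans (sup_le ?_ ?_)))
    · exact (fromEdgeSet_le G).mpr (Set.sdiff_subset.trans r.edges_subset_edgeSet)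
    · exact (edge_le_iff G).mpr (.inr hxa)
    · exact (edge_le_iff G).mpr (.inr hxb)
  · have hxa_new : s(x, a) ∉ r.edgeSet := fun h => hx (r.fst_mem_support_of_mem_edges h)
    -- Of the `r.length + 2` cycle edges, `r.edgeSet` and `s(x, a)` already outnumber the triangles.
    have hsub : insert s(x, a) r.edgeSet ⊆ (parityGraph (fanSystem x r)).edgeSet := by
      rw [hH]
      intro e he
      induction e using Sym2.ind with | _ p q => ?_
      rw [mem_edgeSet, symmDiff_adj, symmDiff_adj, fromEdgeSet_adj, edge_adj, edge_adj]
      rcases he with he | he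
      · have hpq := Sym2.eq_iff.mp he
        rw [he]
        grind [hxa.ne]
      · have hpx : p ≠ x := fun h => hx (h ▸ r.fst_mem_support_of_mem_edges he)
        have hqx : q ≠ x := fun h => hx (h ▸ r.snd_mem_support_of_mem_edges he)
        grind [(r.adj_of_mem_edges he).ne]
    calc Multiset.card (fanSystem x r) = r.edgeSet.ncard := by
          rw [card_fanSystem, hr.isTrail.ncard_edgeSet]
      _ < (insert s(x, a) r.edgeSet).ncard := by
          rw [Set.ncard_insert_of_notMem hxa_new]; omega
      _ ≤ _ := Set.ncard_le_ncard hsub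

end ParityGraph

theorem stmt1 {V : Type*} [Fintype V] [DecidableEq V] (G : SimpleGraph V)
    (h : ¬ IsLinearForest G) :
    c2 G ≤ G.edgeSet.ncard - 1 := by
  rw [IsLinearForest, not_and_or] at h
  rcases h with hcyc | hdeg
  · obtain ⟨x, p, hp⟩ : ∃ x, ∃ p : G.Walk x x, p.IsCycle := by
      simpa [IsAcyclic] using hcyc
    obtain ⟨a, b, hxa, hxb, hab, r, hr, hx⟩ := hp.exists_isPath_of_adj
    exact c2_le_of_path_between_neighbors hxa hxb hab r hr hx
  · obtain ⟨v, hv⟩ := not_forall.mp hdeg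
    obtain ⟨a, ha, b, hb, c, hc, hab, hac, hbc⟩ :=
      (Set.two_lt_ncard (Set.toFinite _)).mp (not_le.mp hv)
    exact c2_le_of_three_neighbors ha hb hc hab hac hbc
end

section
/- If L is a linear forest on n vertices with exactly k connected components, then c₂(L) = n − k (equivalently, c₂(L) equals the number of edges of L). -/
open Matrix

/-!
The sets `{u, v}` for the edges `uv` of `L` form a complementation system, so `c₂(L) ≤ |E(L)|`.
Conversely, summing the rank-one matrices `1_C 1_Cᵀ` over a complementation system `𝒞` gives a
symmetric matrix over `F₂` fitting `L` of rank at most `|𝒞|`. Peeling off leaves, the edges of a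
linear forest can be listed as pairs `(xᵢ, yᵢ)` such that `xᵢ ≠ yⱼ` are non-adjacent whenever
`i < j`; rows `xᵢ` and columns `yᵢ` of any fitting matrix then form a unitriangular submatrix,
so its rank is at least `|E(L)|`. Finally `|E(L)| = n - k` for every forest.
-/

namespace SimpleGraph

variable {V : Type*} {G : SimpleGraph V} {u w : V}

lemma deleteEdges_adj_iff_of_ne {x y : V} (hx : x ≠ u) (hy : y ≠ u) :
    (G.deleteEdges {s(u, w)}).Adj x y ↔ G.Adj x y := by
  simp [deleteEdges_adj, hx, hy]

lemma not_adj_deleteEdges_of_leaf (hu : ∀ x, G.Adj u x → x = w) (x : V) :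
    ¬(G.deleteEdges {s(u, w)}).Adj u x := fun h => by
  have := deleteEdges_adj.mp h
  simp [hu _ this.1] at this

lemma reachable_deleteEdges_of_leaf (hu : ∀ x, G.Adj u x → x = w) {x : V}
    (h : (G.deleteEdges {s(u, w)}).Reachable u x) : x = u := by
  obtain ⟨_ | ⟨hadj, _⟩⟩ := h
  · rfl
  · exact (not_adj_deleteEdges_of_leaf hu _ hadj).elim

theorem card_edgeSet_deleteEdges_add_one [Finite V] {e : Sym2 V} (he : e ∈ G.edgeSet) :
    Nat.card (G.deleteEdges {e}).edgeSet + 1 = Nat.card G.edgeSet := by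
  simp only [Nat.card_coe_set_eq, edgeSet_deleteEdges]
  exact Set.ncard_sdiff_singleton_add_one he (Set.toFinite _)

theorem card_connectedComponent_deleteEdges_of_leaf [Finite V] (huw : G.Adj u w)
    (hu : ∀ x, G.Adj u x → x = w) :
    Nat.card (G.deleteEdges {s(u, w)}).ConnectedComponent = Nat.card G.ConnectedComponent + 1 := by
  classical
  set G' := G.deleteEdges {s(u, w)}
  -- contracting the deleted edge onto `w` turns `G`-walks into `G'`-walks
  set c : V → V := fun x => if x = u then w else x
  have hc : ∀ x, c x ≠ u := fun x => by by_cases hx : x = u <;> simp [c, hx, huw.ne.symm]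
  have hlift : ∀ a b, G.Reachable a b → G'.Reachable (c a) (c b) := by
    intro a b hab
    rw [reachable_iff_reflTransGen] at hab ⊢
    refine Relation.ReflTransGen.lift' c (fun x y hxy => ?_) a b hab
    rw [Function.onFun, ← reachable_iff_reflTransGen]
    by_cases hx : x = u
    · subst hx; simp [c, hu y hxy]
    by_cases hy : y = u
    · subst hy; simp [c, hu x hxy.symm]
    simp only [c, hx, hy, if_false]
    exact ((deleteEdges_adj_iff_of_ne hx hy).mpr hxy).reachable
  set φ := ConnectedComponent.map (Hom.ofLE (deleteEdges_le {s(u, w)}) : G' →g G)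
  have hφ : Function.Bijective fun x : {x // x ≠ G'.connectedComponentMk u} => φ x := by
    refine ⟨fun ⟨x, hx⟩ ⟨y, hy⟩ hxy => ?_, fun z => ?_⟩
    · induction x using ConnectedComponent.ind with | h a => ?_
      induction y using ConnectedComponent.ind with | h b => ?_
      have ha : a ≠ u := by rintro rfl; exact hx rfl
      have hb : b ≠ u := by rintro rfl; exact hy rfl
      have := hlift a b (ConnectedComponent.exact hxy)
      simp only [c, ha, hb, if_false] at this
      exact Subtype.ext (ConnectedComponent.sound this)
    · induction z using ConnectedComponent.ind with | h a => ?_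
      refine ⟨⟨G'.connectedComponentMk (c a), fun h => hc a
        (reachable_deleteEdges_of_leaf hu (ConnectedComponent.exact h).symm)⟩, ?_⟩
      simp only [φ, ConnectedComponent.map_mk, Hom.ofLE_apply]
      by_cases ha : a = u
      · subst ha; simpa [c] using (ConnectedComponent.sound huw.reachable).symm
      · simp [c, ha]
  rw [← Nat.card_eq_of_bijective _ hφ, ← Finite.card_option,
    Nat.card_congr (Equiv.optionSubtypeNe _)]

theorem IsAcyclic.exists_leaf [Finite V] (hG : G.IsAcyclic) {a b : V} (hab : G.Adj a b) :
    ∃ u w, G.Adj u w ∧ ∀ x, G.Adj u x → x = w := by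
  have : Nonempty V := ⟨a⟩
  obtain ⟨u, v, p, hp, hmax⟩ := Walk.exists_isPath_forall_isPath_length_le_length G
  have hnil : ¬p.Nil := fun hnil => by
    have := hmax a b hab.toWalk (by simp [hab.ne])
    simp [Walk.length_eq_zero_iff.mpr hnil] at this
  refine ⟨u, p.snd, p.adj_snd hnil, fun x hx => hG.eq_snd_of_adj_start hp hx ?_⟩
  by_contra hxp
  have := hmax _ _ (p.cons hx.symm) (hp.cons hxp)
  simp at this

@[elab_as_elim]
theorem IsAcyclic.induction_on_leaf [Finite V] {P : (G : SimpleGraph V) → G.IsAcyclic → Prop}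
    (bot : P ⊥ isAcyclic_bot)
    (step : ∀ (G : SimpleGraph V) (u w : V) (hG : G.IsAcyclic), G.Adj u w →
      (∀ x, G.Adj u x → x = w) → P (G.deleteEdges {s(u, w)}) (hG.anti (deleteEdges_le _)) →
      P G hG)
    (G : SimpleGraph V) (hG : G.IsAcyclic) : P G hG := by
  induction hn : Nat.card G.edgeSet using Nat.strong_induction_on generalizing G with
  | _ n ih =>
  by_cases hbot : G = ⊥
  · subst hbot; exact bot
  obtain ⟨a, b, hab⟩ : ∃ a b, G.Adj a b := by
    by_contra! h
    exact hbot (edgeSet_eq_empty.mp (Set.eq_empty_of_forall_notMem (Sym2.ind h)))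
  obtain ⟨u, w, huw, hu⟩ := hG.exists_leaf hab
  refine step G u w hG huw hu (ih _ ?_ _ _ rfl)
  have := card_edgeSet_deleteEdges_add_one (G.mem_edgeSet.mpr huw)
  omega

theorem IsAcyclic.card_edgeSet_add_card_connectedComponent [Finite V] (hG : G.IsAcyclic) :
    Nat.card G.edgeSet + Nat.card G.ConnectedComponent = Nat.card V := by
  induction G, hG using IsAcyclic.induction_on_leaf with
  | bot =>
    rw [edgeSet_bot, Nat.card_of_isEmpty, zero_add]
    exact Nat.card_eq_of_bijective _ ⟨fun a b h => reachable_bot.mp (ConnectedComponent.exact h),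
      fun c => c.exists_rep⟩ |>.symm
  | step G u w _ huw hu ih =>
    have := card_edgeSet_deleteEdges_add_one (G.mem_edgeSet.mpr huw)
    have := card_connectedComponent_deleteEdges_of_leaf huw hu
    omega

def IsTriangularEdgeList (G : SimpleGraph V) (l : List (V × V)) : Prop :=
  (∀ p ∈ l, G.Adj p.1 p.2) ∧ l.Pairwise fun p q => p.1 ≠ q.2 ∧ ¬G.Adj p.1 q.2

lemma ncard_neighborSet_deleteEdges_of_leaf [Finite V] (huw : G.Adj u w)
    (hu : ∀ x, G.Adj u x → x = w) (hw : (G.neighborSet w).ncard ≤ 2) :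
    ((G.deleteEdges {s(u, w)}).neighborSet w).ncard ≤ 1 := by
  have hsub : (G.deleteEdges {s(u, w)}).neighborSet w ⊆ G.neighborSet w \ {u} :=
    fun x hx => ⟨deleteEdges_le _ hx, fun hxu => not_adj_deleteEdges_of_leaf hu w (hxu ▸ hx).symm⟩
  have := Set.ncard_sdiff_singleton_of_mem (show u ∈ G.neighborSet w from huw.symm)
  have := Set.ncard_le_ncard hsub (Set.toFinite _)
  omega

theorem IsTriangularEdgeList.exists_of_deleteEdges_leaf [Finite V] (huw : G.Adj u w)
    (hu : ∀ x, G.Adj u x → x = w) (hw : (G.neighborSet w).ncard ≤ 2) {l : List (V × V)}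
    (hl : (G.deleteEdges {s(u, w)}).IsTriangularEdgeList l) :
    ∃ l', G.IsTriangularEdgeList l' ∧ l'.length = l.length + 1 := by
  set G' := G.deleteEdges {s(u, w)}
  obtain ⟨hadj, hpw⟩ := hl
  have hu1 : ∀ p ∈ l, p.1 ≠ u := fun p hp h => not_adj_deleteEdges_of_leaf hu _ (h ▸ hadj p hp)
  have hu2 : ∀ p ∈ l, p.2 ≠ u := fun p hp h =>
    not_adj_deleteEdges_of_leaf hu _ (h ▸ (hadj p hp).symm)
  have hGadj : ∀ p ∈ l, G.Adj p.1 p.2 := fun p hp => deleteEdges_le _ (hadj p hp)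
  have hGpw : l.Pairwise fun p q => p.1 ≠ q.2 ∧ ¬G.Adj p.1 q.2 :=
    hpw.imp_of_mem fun hp hq h =>
      ⟨h.1, (deleteEdges_adj_iff_of_ne (w := w) (hu1 _ hp) (hu2 _ hq)).not.mp h.2⟩
  -- `w` has at most one neighbour in `G'`, so it cannot be both a head and a tail in `l`
  have hw : (∀ q ∈ l, q.2 ≠ w) ∨ ∀ p ∈ l, p.1 ≠ w := by
    by_contra! ⟨⟨q, hq, hq2⟩, ⟨p, hp, hp1⟩⟩
    have hz : p.2 = q.1 := (Set.ncard_le_one (Set.toFinite _)).mp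
      (ncard_neighborSet_deleteEdges_of_leaf huw hu hw)
      _ (show G'.Adj w p.2 from hp1 ▸ hadj p hp) _ (show G'.Adj w q.1 from hq2 ▸ (hadj q hq).symm)
    have hpq : p ≠ q := fun h => (hadj p hp).ne (by rw [hp1, h, hq2])
    have : Std.Symm fun p q : V × V => p.1 ≠ q.2 ∨ q.1 ≠ p.2 := ⟨fun _ _ h => h.symm⟩
    have := (hpw.imp fun h => Or.inl h.1 : l.Pairwise fun p q => p.1 ≠ q.2 ∨ q.1 ≠ p.2).forall
      hp hq hpq
    rw [hp1, hq2, hz] at this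
    simp at this
  rcases hw with hw | hw
  · refine ⟨(u, w) :: l, ⟨?_, List.pairwise_cons.mpr ⟨fun q hq => ⟨(hu2 q hq).symm, ?_⟩, hGpw⟩⟩,
      rfl⟩
    · simpa [huw] using hGadj
    · exact fun h => hw q hq (hu _ h)
  · refine ⟨l ++ [(w, u)], ⟨?_, List.pairwise_append.mpr ⟨hGpw, by simp, ?_⟩⟩, by simp⟩
    · simpa [huw.symm, or_imp, forall_and] using hGadj
    · simp only [List.mem_singleton, forall_eq]
      exact fun p hp => ⟨hu1 p hp, fun h => hw p hp (hu _ h.symm)⟩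

theorem _root_.IsLinearForest.exists_isTriangularEdgeList [Finite V] (hG : IsLinearForest G) :
    ∃ l, G.IsTriangularEdgeList l ∧ l.length = Nat.card G.edgeSet := by
  obtain ⟨hac, hdeg⟩ := hG
  induction G, hac using IsAcyclic.induction_on_leaf with
  | bot => exact ⟨[], by simp [IsTriangularEdgeList], by simp⟩
  | step G u w _ huw hu ih =>
    obtain ⟨l, hl, hlen⟩ := ih fun v =>
      (Set.ncard_le_ncard (fun x hx => deleteEdges_le _ hx) (Set.toFinite _)).trans (hdeg v)
    obtain ⟨l', hl', hlen'⟩ := hl.exists_of_deleteEdges_leaf huw hu (hdeg w)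
    exact ⟨l', hl', by rw [hlen', hlen, card_edgeSet_deleteEdges_add_one (G.mem_edgeSet.mpr huw)]⟩

end SimpleGraph

theorem Matrix.card_le_rank_of_isLowerTriangular_submatrix {m n ι F : Type*} [Fintype n]
    [Fintype ι] [LinearOrder ι] [Field F] (A : Matrix m n F) (r : ι → m) (c : ι → n)
    (h : (A.submatrix r c).IsLowerTriangular) (hdiag : ∀ i, A (r i) (c i) ≠ 0) :
    Fintype.card ι ≤ A.rank := by
  classical
  have hunit : IsUnit (A.submatrix r c) := by
    rw [Matrix.isUnit_iff_isUnit_det, Matrix.det_of_isLowerTriangular _ h, isUnit_iff_ne_zero]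
    exact Finset.prod_ne_zero_iff.mpr fun i _ => hdiag i
  exact (Matrix.rank_of_isUnit _ hunit).symm.le.trans (A.rank_submatrix_le r c)

section Rank

variable {V : Type*} {G : SimpleGraph V} {A : Matrix V V (ZMod 2)}

lemma FitsF2.apply_eq_zero (hA : FitsF2 G A) {u v : V} (huv : u ≠ v) (h : ¬G.Adj u v) :
    A u v = 0 :=
  (by decide : ∀ a : ZMod 2, a ≠ 1 → a = 0) _ fun h1 => h ((hA.2 u v huv).mp h1)

theorem SimpleGraph.IsTriangularEdgeList.length_le_rank [Fintype V] {l : List (V × V)}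
    (hl : G.IsTriangularEdgeList l) (hA : FitsF2 G A) : l.length ≤ A.rank := by
  have hadj : ∀ i : Fin l.length, G.Adj (l.get i).1 (l.get i).2 := fun i => hl.1 _ (l.get_mem i)
  simpa using A.card_le_rank_of_isLowerTriangular_submatrix (fun i => (l.get i).1)
    (fun i => (l.get i).2)
    (fun i j hij => hA.apply_eq_zero (List.pairwise_iff_get.mp hl.2 i j hij).1
      (List.pairwise_iff_get.mp hl.2 i j hij).2)
    (fun i => by rw [(hA.2 _ _ (hadj i).ne).mpr (hadj i)]; exact one_ne_zero)

theorem IsSCS.exists_fitsF2_rank_le [Fintype V] [DecidableEq V] {𝒞 : Multiset (Finset V)}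
    (h : IsSCS G 𝒞) : ∃ A : Matrix V V (ZMod 2), FitsF2 G A ∧ A.rank ≤ Multiset.card 𝒞 := by
  -- one column for each member of `𝒞`, counted with multiplicity
  let N : Matrix V 𝒞 (ZMod 2) := Matrix.of fun v C => if v ∈ (C : Finset V) then 1 else 0
  have hentry : ∀ u v, (N * Nᵀ) u v = Multiset.card (𝒞.filter fun C => u ∈ C ∧ v ∈ C) := by
    intro u v
    simp only [N, Matrix.mul_apply, Matrix.transpose_apply, Matrix.of_apply, ite_zero_mul_ite_zero,
      mul_one, Finset.sum_boole]
    conv_rhs => rw [← Multiset.map_univ_coe 𝒞, Multiset.filter_map, Multiset.card_map]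
    rfl
  refine ⟨N * Nᵀ, ⟨?_, fun u v huv => ?_⟩, ?_⟩
  · simp [Matrix.IsSymm, Matrix.transpose_mul]
  · rw [hentry, ZMod.natCast_eq_one_iff_odd, h u v huv]
  · calc (N * Nᵀ).rank ≤ N.rank := Matrix.rank_mul_le_left _ _
      _ ≤ Fintype.card 𝒞 := N.rank_le_card_width
      _ = Multiset.card 𝒞 := Multiset.card_coe 𝒞

end Rank

section SubgraphComplementation

variable {V : Type*} [DecidableEq V] {G : SimpleGraph V}

theorem isSCS_edgeFinset [Fintype G.edgeSet] : IsSCS G (G.edgeFinset.val.map Sym2.toFinset) := by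
  intro u v huv
  rw [Multiset.filter_map, Multiset.card_map]
  simp only [Function.comp_def, Sym2.mem_toFinset, Sym2.mem_and_mem_iff huv]
  rw [← Finset.filter_val, ← Finset.card_def, Finset.filter_eq']
  by_cases h : G.Adj u v <;> simp [h]

theorem c2_le_card_edgeSet [Fintype V] (G : SimpleGraph V) : c2 G ≤ Nat.card G.edgeSet := by
  classical
  exact Nat.sInf_le
    ⟨_, isSCS_edgeFinset, by simp [SimpleGraph.edgeFinset_card, Nat.card_eq_fintype_card]⟩

theorem IsLinearForest.card_edgeSet_le_c2 [Fintype V] (hG : IsLinearForest G) :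
    Nat.card G.edgeSet ≤ c2 G := by
  classical
  obtain ⟨l, hl, hlen⟩ := hG.exists_isTriangularEdgeList
  refine le_csInf ⟨_, _, isSCS_edgeFinset, rfl⟩ ?_
  rintro _ ⟨𝒞, h𝒞, rfl⟩
  obtain ⟨A, hA, hrank⟩ := h𝒞.exists_fitsF2_rank_le
  exact hlen ▸ (hl.length_le_rank hA).trans hrank

end SubgraphComplementation

theorem stmt2 {V : Type*} [Fintype V] [DecidableEq V] (L : SimpleGraph V)
    (hL : IsLinearForest L) (n k : ℕ) (hn : Fintype.card V = n)
    (hk : Nat.card L.ConnectedComponent = k) :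
    c2 L = n - k := by
  rw [← hn, ← hk, ← Nat.card_eq_fintype_card, ← hL.1.card_edgeSet_add_card_connectedComponent,
    Nat.add_sub_cancel]
  exact le_antisymm (c2_le_card_edgeSet L) hL.card_edgeSet_le_c2
end

section
/- For every n ≥ 3, the cycle graph C_n on n vertices satisfies c₂(C_n) = n − 2. -/
/-!
A system `𝒞` gives the `𝔽₂`-matrix whose `(u, v)` entry is the parity of the number of
sets containing both `u` and `v`. It is the sum of the `|𝒞|` rank-one matrices `1_C 1_Cᵀ`,
and off the diagonal it is the adjacency matrix of `G`. For `C_n`, rows `0, …, n-3` and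
columns `1, …, n-2` of any such matrix form a lower unitriangular block, so `|𝒞| ≥ n - 2`.
Conversely, the `n - 2` triangles `{k, k+1, n-1}` (`k < n - 2`) complement every path edge
`{k, k+1}` once, the edges `{0, n-1}` and `{n-2, n-1}` once, and every other pair
`{k, n-1}` twice.
-/

open Matrix

namespace SimpleGraph

theorem cycleGraph_adj_iff_val {n : ℕ} {u v : Fin n} (hn : 1 < n) :
    (cycleGraph n).Adj u v ↔ (v : ℕ) = u + 1 ∨ (u : ℕ) = v + 1 ∨
      ((u : ℕ) = 0 ∧ (v : ℕ) = n - 1) ∨ ((v : ℕ) = 0 ∧ (u : ℕ) = n - 1) := by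
  have hu := u.isLt
  have hv := v.isLt
  rw [cycleGraph_adj']
  rcases lt_trichotomy u v with h | rfl | h
  · rw [Fin.coe_sub_iff_lt.2 h, Fin.coe_sub_iff_le.2 h.le]
    omega
  · rw [Fin.coe_sub_iff_le.2 le_rfl]
    omega
  · rw [Fin.coe_sub_iff_lt.2 h, Fin.coe_sub_iff_le.2 h.le]
    omega

end SimpleGraph

namespace Matrix

variable {m n K : Type*} [Fintype n] [Field K]

theorem rank_add_le (A B : Matrix m n K) : (A + B).rank ≤ A.rank + B.rank := by
  rw [rank, rank, rank, mulVecLin_add]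
  refine (Submodule.finrank_mono ?_).trans (Submodule.finrank_add_le_finrank_add_finrank _ _)
  rintro _ ⟨x, rfl⟩
  exact Submodule.add_mem_sup ⟨x, rfl⟩ ⟨x, rfl⟩

theorem rank_multiset_sum_le_card (s : Multiset (Matrix m n K)) (hs : ∀ A ∈ s, A.rank ≤ 1) :
    s.sum.rank ≤ Multiset.card s := by
  induction s using Multiset.induction_on with
  | empty => simp
  | cons A s ih =>
    rw [Multiset.sum_cons, Multiset.card_cons, add_comm (Multiset.card s)]
    exact (rank_add_le _ _).trans (add_le_add (hs A (s.mem_cons_self A))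
      (ih fun B hB => hs B (Multiset.mem_cons_of_mem hB)))

end Matrix

section PairParity

variable {V : Type*} [DecidableEq V]

def pairParityMatrix (𝒞 : Multiset (Finset V)) : Matrix V V (ZMod 2) :=
  Matrix.of fun u v => ((𝒞.filter fun C => u ∈ C ∧ v ∈ C).card : ZMod 2)

theorem pairParityMatrix_eq_sum (𝒞 : Multiset (Finset V)) :
    pairParityMatrix 𝒞 =
      (𝒞.map fun C => vecMulVec (fun v => if v ∈ C then 1 else 0)
        (fun v => if v ∈ C then 1 else 0)).sum := by
  induction 𝒞 using Multiset.induction_on with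
  | empty => ext; simp [pairParityMatrix]
  | cons C 𝒞 ih =>
    rw [Multiset.map_cons, Multiset.sum_cons, ← ih]
    ext u v
    by_cases hu : u ∈ C <;> by_cases hv : v ∈ C <;>
      simp [pairParityMatrix, Multiset.filter_cons, hu, hv, vecMulVec_apply]

theorem rank_pairParityMatrix_le [Fintype V] (𝒞 : Multiset (Finset V)) :
    (pairParityMatrix 𝒞).rank ≤ Multiset.card 𝒞 := by
  rw [pairParityMatrix_eq_sum]
  refine (Matrix.rank_multiset_sum_le_card _ ?_).trans (Multiset.card_map _ _).le
  simp only [Multiset.mem_map]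
  rintro _ ⟨C, -, rfl⟩
  exact rank_vecMulVec_le _ _

theorem IsSCS.fitsF2_pairParityMatrix {G : SimpleGraph V} {𝒞 : Multiset (Finset V)}
    (h : IsSCS G 𝒞) : FitsF2 G (pairParityMatrix 𝒞) := by
  refine ⟨Matrix.IsSymm.ext fun u v => ?_, fun u v huv => ?_⟩
  · simp only [pairParityMatrix, of_apply, and_comm]
  · rw [h u v huv, pairParityMatrix, of_apply, ZMod.natCast_eq_one_iff_odd]

end PairParity

theorem FitsF2.apply_eq_zero_of_not_adj {V : Type*} {G : SimpleGraph V} {A : Matrix V V (ZMod 2)}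
    (hA : FitsF2 G A) {u v : V} (huv : u ≠ v) (h : ¬G.Adj u v) : A u v = 0 := by
  have hne : A u v ≠ 1 := fun h1 => h ((hA.2 u v huv).1 h1)
  generalize A u v = x at hne ⊢
  revert x
  decide

theorem FitsF2.sub_two_le_rank_of_cycleGraph {n : ℕ} {A : Matrix (Fin n) (Fin n) (ZMod 2)}
    (hA : FitsF2 (SimpleGraph.cycleGraph n) A) : n - 2 ≤ A.rank := by
  obtain hn | hn := lt_or_ge n 3
  · omega
  set M := A.submatrix (fun i : Fin (n - 2) => (⟨i, by omega⟩ : Fin n))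
    (fun j : Fin (n - 2) => (⟨j + 1, by omega⟩ : Fin n))
  have hM : M.IsLowerTriangular := by
    intro i j hij
    rw [OrderDual.toDual_lt_toDual, Fin.lt_def] at hij
    have hj := j.isLt
    refine hA.apply_eq_zero_of_not_adj (Fin.ne_of_val_ne (by dsimp only; omega)) ?_
    rw [SimpleGraph.cycleGraph_adj_iff_val (by omega)]
    dsimp only
    omega
  have hdiag : ∀ i, M i i = 1 := fun i =>
    (hA.2 _ _ (Fin.ne_of_val_ne (by dsimp only; omega))).2
      ((SimpleGraph.cycleGraph_adj_iff_val (by omega)).2 (.inl rfl))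
  have hdet : M.det = 1 := by
    rw [det_of_isLowerTriangular M hM]
    exact Finset.prod_eq_one fun i _ => hdiag i
  calc n - 2 = M.rank := by rw [rank_of_det_ne_zero (hdet ▸ one_ne_zero), Fintype.card_fin]
    _ ≤ A.rank := rank_submatrix_le _ _ _

open Finset in
theorem odd_card_filter_range_iff {n a b : ℕ} (hn : 3 ≤ n) (hab : a < b) (hb : b < n) :
    Odd #{k ∈ range (n - 2) |
        (a = k ∨ a = k + 1 ∨ a = n - 1) ∧ (b = k ∨ b = k + 1 ∨ b = n - 1)} ↔
      b = a + 1 ∨ (a = 0 ∧ b = n - 1) := by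
  rw [Nat.odd_iff]
  obtain h | h | h | h | h : (a = 0 ∧ b = n - 1) ∨ (0 < a ∧ a = n - 2 ∧ b = n - 1) ∨
      (0 < a ∧ a < n - 2 ∧ b = n - 1) ∨ (b < n - 1 ∧ b = a + 1) ∨ (b < n - 1 ∧ b ≠ a + 1) := by
    omega
  · rw [card_eq_one.2 ⟨0, by
      ext k; simp only [mem_filter, mem_range, mem_singleton]; omega⟩]
    omega
  · rw [card_eq_one.2 ⟨n - 3, by
      ext k; simp only [mem_filter, mem_range, mem_singleton]; omega⟩]
    omega
  · rw [card_eq_two.2 ⟨a - 1, a, by omega, by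
      ext k; simp only [mem_filter, mem_range, mem_insert, mem_singleton]; omega⟩]
    omega
  · rw [card_eq_one.2 ⟨a, by
      ext k; simp only [mem_filter, mem_range, mem_singleton]; omega⟩]
    omega
  · rw [card_eq_zero.2 (filter_eq_empty_iff.2 fun k hk => by rw [mem_range] at hk; omega)]
    omega

def cycleSCS (n : ℕ) : Multiset (Finset (Fin n)) :=
  (Multiset.range (n - 2)).map fun k =>
    ({u | (u : ℕ) = k ∨ (u : ℕ) = k + 1 ∨ (u : ℕ) = n - 1} : Finset (Fin n))

theorem card_cycleSCS (n : ℕ) : Multiset.card (cycleSCS n) = n - 2 := by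
  simp [cycleSCS]

theorem isSCS_cycleSCS {n : ℕ} (hn : 3 ≤ n) :
    IsSCS (SimpleGraph.cycleGraph n) (cycleSCS n) := by
  intro u v huv
  wlog h : u < v generalizing u v
  · have := this v u huv.symm (lt_of_le_of_ne (not_lt.1 h) huv.symm)
    simpa only [SimpleGraph.adj_comm, and_comm] using this
  rw [Fin.lt_def] at h
  rw [SimpleGraph.cycleGraph_adj_iff_val (by omega), cycleSCS, Multiset.filter_map,
    Multiset.card_map, ← Finset.range_val, ← Finset.filter_val, ← Finset.card_def]
  simp only [Function.comp_def, Finset.mem_filter_univ]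
  rw [odd_card_filter_range_iff hn h v.isLt]
  omega

theorem stmt3 (n : ℕ) (hn : 3 ≤ n) :
    c2 (SimpleGraph.cycleGraph n) = n - 2 := by
  have hmem : n - 2 ∈ {k | ∃ 𝒞 : Multiset (Finset (Fin n)),
      IsSCS (SimpleGraph.cycleGraph n) 𝒞 ∧ Multiset.card 𝒞 = k} :=
    ⟨cycleSCS n, isSCS_cycleSCS hn, card_cycleSCS n⟩
  refine le_antisymm (Nat.sInf_le hmem) (le_csInf ⟨_, hmem⟩ ?_)
  rintro _ ⟨𝒞, h𝒞, rfl⟩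
  exact h𝒞.fitsF2_pairParityMatrix.sub_two_le_rank_of_cycleGraph.trans
    (rank_pairParityMatrix_le 𝒞)
end

section
/- For every finite simple graph G, c₂(G) ≤ 2·τ(G), where τ(G) is the vertex cover number of G. -/
open Matrix

/-- The vertex cover number `τ(G)`: the minimum cardinality of a set of vertices meeting
every edge of `G`. -/
noncomputable def vertexCoverNumber {V : Type*} [Fintype V] [DecidableEq V]
    (G : SimpleGraph V) : ℕ :=
  sInf {k | ∃ S : Finset V, (∀ u v : V, G.Adj u v → u ∈ S ∨ v ∈ S) ∧ S.card = k}

/-!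
Deleting the edges at a vertex `x` of a vertex cover `S` leaves a graph covered by `S \ {x}`, and
the deleted star from `x` to its neighbourhood `N` is realised by the two sets `N` and
`insert x N`: a pair inside `N` lies in both, a pair `{x, y}` with `y ∈ N` only in the second.
Concatenating systems realises the symmetric difference of graphs, so induction on `S` gives a
system with `2 * #S` sets.
-/

open scoped symmDiff

namespace SimpleGraph

variable {V : Type*}

theorem symmDiff_adj_s4 (G₁ G₂ : SimpleGraph V) (u v : V) :
    (G₁ ∆ G₂).Adj u v ↔ Xor (G₁.Adj u v) (G₂.Adj u v) :=
  Iff.rfl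

theorem IsVertexCover.deleteIncidenceSet {G : SimpleGraph V} {x : V} {c : Set V}
    (hc : G.IsVertexCover (insert x c)) : (G.deleteIncidenceSet x).IsVertexCover c := by
  intro u v huv
  obtain ⟨hadj, hu, hv⟩ := deleteIncidenceSet_adj.mp huv
  simpa [hu, hv] using hc hadj

theorem deleteIncidenceSet_symmDiff_fromRel (G : SimpleGraph V) (x : V) :
    G.deleteIncidenceSet x ∆ fromRel (fun u v => u = x ∧ G.Adj x v) = G := by
  ext u v
  rw [symmDiff_adj_s4, deleteIncidenceSet_adj, fromRel_adj]
  by_cases hu : u = x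
  · subst hu
    simpa using fun h => h.ne
  by_cases hv : v = x
  · subst hv
    simp [hu, adj_comm]
  · simp [hu, hv, Xor]

end SimpleGraph

section

variable {V : Type*} [DecidableEq V]

theorem isSCS_bot : IsSCS (⊥ : SimpleGraph V) 0 := by
  intro u v _
  simp

theorem IsSCS.symmDiff {G₁ G₂ : SimpleGraph V} {𝒞₁ 𝒞₂ : Multiset (Finset V)}
    (h₁ : IsSCS G₁ 𝒞₁) (h₂ : IsSCS G₂ 𝒞₂) : IsSCS (G₁ ∆ G₂) (𝒞₁ + 𝒞₂) := by
  intro u v huv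
  rw [SimpleGraph.symmDiff_adj_s4, h₁ u v huv, h₂ u v huv, Multiset.filter_add, Multiset.card_add,
    Nat.odd_add, ← Nat.not_odd_iff_even, xor_iff_iff_not]

theorem isSCS_fromRel {x : V} {A : Finset V} (hx : x ∉ A) :
    IsSCS (SimpleGraph.fromRel fun u v => u = x ∧ v ∈ A) {A, insert x A} := by
  intro u v huv
  rcases eq_or_ne u x with rfl | hux
  · by_cases hv : v ∈ A <;> simp [Multiset.filter_singleton, hx, hv, huv, huv.symm]
  rcases eq_or_ne v x with rfl | hvx
  · by_cases hu : u ∈ A <;> simp [Multiset.filter_singleton, hx, hu, huv]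
  by_cases h : u ∈ A ∧ v ∈ A <;> simp [Multiset.filter_singleton, h, hux, hvx, huv]

theorem exists_isSCS_card_eq_of_isVertexCover [Fintype V] {G : SimpleGraph V} {S : Finset V}
    (hS : G.IsVertexCover S) : ∃ 𝒞, IsSCS G 𝒞 ∧ Multiset.card 𝒞 = 2 * S.card := by
  classical
  induction S using Finset.induction_on generalizing G with
  | empty =>
    rw [Finset.coe_empty, SimpleGraph.isVertexCover_empty] at hS
    exact ⟨0, hS ▸ isSCS_bot, rfl⟩
  | insert x S hxS ih =>
    rw [Finset.coe_insert] at hS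
    obtain ⟨𝒞, h𝒞, hcard⟩ := ih hS.deleteIncidenceSet
    refine ⟨𝒞 + {G.neighborFinset x, insert x (G.neighborFinset x)}, ?_, ?_⟩
    · have hstar := isSCS_fromRel (G.notMem_neighborFinset_self x)
      simp only [SimpleGraph.mem_neighborFinset] at hstar
      simpa only [G.deleteIncidenceSet_symmDiff_fromRel x] using h𝒞.symmDiff hstar
    · rw [Multiset.card_add, hcard, Finset.card_insert_of_notMem hxS, Multiset.card_pair]
      ring

end

theorem stmt4 {V : Type*} [Fintype V] [DecidableEq V] (G : SimpleGraph V) :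
    c2 G ≤ 2 * vertexCoverNumber G := by
  obtain ⟨S, hS, hScard⟩ : vertexCoverNumber G ∈
      {k | ∃ S : Finset V, (∀ u v : V, G.Adj u v → u ∈ S ∨ v ∈ S) ∧ S.card = k} :=
    Nat.sInf_mem ⟨_, Finset.univ, fun u _ _ => Or.inl (Finset.mem_univ u), rfl⟩
  obtain ⟨𝒞, h𝒞, h𝒞card⟩ := exists_isSCS_card_eq_of_isVertexCover (G := G) (S := S) hS
  rw [← hScard, ← h𝒞card]
  exact Nat.sInf_le ⟨𝒞, h𝒞, rfl⟩
end

section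
/- Let G be a finite simple graph, let v be a vertex of G, and let 𝒞 be a subgraph complementation system for G in which every vertex other than v appears an even number of times. Then the collection 𝒞_v = { C △ {v} : C ∈ 𝒞 }, consisting of the symmetric differences of {v} with each set in 𝒞, is also a subgraph complementation system for G. -/
open Matrix

lemma filter_and_comm {V : Type*} [DecidableEq V] (𝒞 : Multiset (Finset V)) (x y : V) :
    𝒞.filter (fun C => x ∈ C ∧ y ∈ C) = 𝒞.filter (fun C => y ∈ C ∧ x ∈ C) :=
  Multiset.filter_congr (fun C _ => by tauto)

lemma parity_aux {V : Type*} [DecidableEq V] (𝒞 : Multiset (Finset V)) (x y : V)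
    (hx : Even (Multiset.card (𝒞.filter (fun C => x ∈ C)))) :
    Odd (Multiset.card (𝒞.filter (fun C => x ∈ C ∧ y ∉ C))) ↔
      Odd (Multiset.card (𝒞.filter (fun C => x ∈ C ∧ y ∈ C))) := by
  have h1 : (𝒞.filter (fun C => x ∈ C)).filter (fun C => y ∈ C)
      + (𝒞.filter (fun C => x ∈ C)).filter (fun C => y ∉ C)
      = 𝒞.filter (fun C => x ∈ C) := Multiset.filter_add_not _ _
  have h2 := congrArg Multiset.card h1
  rw [Multiset.card_add, Multiset.filter_filter, Multiset.filter_filter] at h2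
  rw [show (𝒞.filter (fun a => y ∈ a ∧ x ∈ a)) = 𝒞.filter (fun C => x ∈ C ∧ y ∈ C) from
    Multiset.filter_congr (fun C _ => by tauto)] at h2
  rw [show (𝒞.filter (fun a => y ∉ a ∧ x ∈ a)) = 𝒞.filter (fun C => x ∈ C ∧ y ∉ C) from
    Multiset.filter_congr (fun C _ => by tauto)] at h2
  rw [← h2] at hx
  rcases Nat.even_or_odd (Multiset.card (𝒞.filter (fun C => x ∈ C ∧ y ∈ C))) with h | h <;>
    rcases Nat.even_or_odd (Multiset.card (𝒞.filter (fun C => x ∈ C ∧ y ∉ C))) with h' | h' <;>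
    simp_all [Nat.even_iff, Nat.odd_iff] <;> omega

theorem stmt5' {V : Type*} [DecidableEq V] (G : SimpleGraph V) (v : V)
    (𝒞 : Multiset (Finset V)) (h𝒞 : ∀ u w : V, u ≠ w → (G.Adj u w ↔ Odd (Multiset.card (𝒞.filter (fun C => u ∈ C ∧ w ∈ C)))))
    (heven : ∀ u : V, u ≠ v → Even (Multiset.card (𝒞.filter (fun C => u ∈ C)))) :
    ∀ u w : V, u ≠ w → (G.Adj u w ↔ Odd (Multiset.card ((𝒞.map (fun C => symmDiff C {v})).filter (fun C => u ∈ C ∧ w ∈ C)))) := by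
  intro u w huw
  rw [Multiset.filter_map, Multiset.card_map]
  by_cases hu : u = v
  · subst hu
    have hw : w ≠ u := huw.symm
    rw [show 𝒞.filter ((fun C => u ∈ C ∧ w ∈ C) ∘ (fun C => symmDiff C {u}))
        = 𝒞.filter (fun C => w ∈ C ∧ u ∉ C) from Multiset.filter_congr (fun C _ => by
      simp [Function.comp, Finset.mem_symmDiff, hw]; tauto)]
    rw [parity_aux 𝒞 w u (heven w hw), filter_and_comm 𝒞 w u]
    exact h𝒞 u w huw
  · by_cases hwv : w = v
    · subst hwv
      rw [show 𝒞.filter ((fun C => u ∈ C ∧ w ∈ C) ∘ (fun C => symmDiff C {w}))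
          = 𝒞.filter (fun C => u ∈ C ∧ w ∉ C) from Multiset.filter_congr (fun C _ => by
        simp [Function.comp, Finset.mem_symmDiff, hu])]
      rw [parity_aux 𝒞 u w (heven u hu)]
      exact h𝒞 u w huw
    · rw [show 𝒞.filter ((fun C => u ∈ C ∧ w ∈ C) ∘ (fun C => symmDiff C {v}))
          = 𝒞.filter (fun C => u ∈ C ∧ w ∈ C) from Multiset.filter_congr (fun C _ => by
        simp [Function.comp, Finset.mem_symmDiff, hu, hwv])]
      exact h𝒞 u w huw

theorem stmt5 {V : Type*} [DecidableEq V] (G : SimpleGraph V) (v : V)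
    (𝒞 : Multiset (Finset V)) (h𝒞 : IsSCS G 𝒞)
    (heven : ∀ u : V, u ≠ v → Even (Multiset.card (𝒞.filter (fun C => u ∈ C)))) :
    IsSCS G (𝒞.map (fun C => symmDiff C {v})) := stmt5' G v 𝒞 h𝒞 heven
end

section
/- Let A be an n×n symmetric matrix over F₂ of rank k. Then either (i) there exists an n×k matrix X over F₂ of rank k with A = X Xᵀ, or (ii) k is even and there exists an n×(k+1) matrix X over F₂ of rank k with A = X Xᵀ. -/
open Matrix

/-!
Induction on the rank `k`. If `A i i ≠ 0`, then `a = A eᵢ` has `eᵢ ⬝ a = 1`, and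
`B = A - a aᵀ` has rank `k - 1` with `a` outside its column space, since `eᵢ ⬝ B x = 0` for
all `x`. A factor `B = Y Yᵀ` with `k - 1` columns extends to `A = [Y | a] [Y | a]ᵀ`. If instead
`B` has zero diagonal, its factor `Y` has `k` columns and rank `k - 1`, and `Y 1 = 0` because
the diagonal of `Y Yᵀ` is `Y 1` over `F₂`. As `k - 1` is even, `1 ⬝ 1 = k = 1` in `F₂`, whence
`A = (Y + a 1ᵀ)(Y + a 1ᵀ)ᵀ`.

Over `F₂` a symmetric matrix with zero diagonal is alternating, so its rank is even (split off
hyperbolic planes). Moreover `u = eᵢ + eⱼ` with `A i j = 1` is isotropic, so `A - (A u)(A u)ᵀ`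
has the same column space as `A` and a nonzero diagonal entry; factoring it and appending the
column `A u` gives a factor with `k + 1` columns.
-/

open Module Submodule

section LinearMap

variable {R M N : Type*} [Ring R] [AddCommGroup M] [AddCommGroup N] [Module R M] [Module R N]
  {f g : M →ₗ[R] N} {W : Submodule R N}

theorem LinearMap.range_le_range_sup_of_sub_mem (h : ∀ x, f x - g x ∈ W) :
    range f ≤ range g ⊔ W := by
  rintro _ ⟨x, rfl⟩
  simpa using add_mem_sup (mem_range_self g x) (h x)

theorem LinearMap.range_sup_eq_of_sub_mem (h : ∀ x, f x - g x ∈ W) :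
    range f ⊔ W = range g ⊔ W :=
  le_antisymm (sup_le (range_le_range_sup_of_sub_mem h) le_sup_right)
    (sup_le (range_le_range_sup_of_sub_mem fun x => by simpa using W.neg_mem (h x))
      le_sup_right)

end LinearMap

namespace Matrix

section rank

variable {K : Type*} [Field K] {l m n : Type*}

theorem rank_eq_zero_iff [Fintype n] {A : Matrix m n K} : A.rank = 0 ↔ A = 0 := by
  classical
  rw [rank, Submodule.finrank_eq_zero, LinearMap.range_eq_bot, ← toLin'_apply',
    LinearEquiv.map_eq_zero_iff]

theorem range_mulVecLin_mul_of_rank_eq [Fintype l] [Fintype m] {X : Matrix n m K}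
    {Y : Matrix m l K} (h : (X * Y).rank = X.rank) :
    LinearMap.range (X * Y).mulVecLin = LinearMap.range X.mulVecLin :=
  Submodule.eq_of_le_of_finrank_eq
    (by rw [mulVecLin_mul]; exact LinearMap.range_comp_le_range _ _) h

theorem rank_eq_rank_add_one_of_range [Fintype n] [Fintype m] [Fintype l] {A : Matrix n m K}
    {B : Matrix n l K} {a : n → K}
    (hB : LinearMap.range B.mulVecLin ⊔ span K {a} = LinearMap.range A.mulVecLin)
    (ha : a ∉ LinearMap.range B.mulVecLin) : A.rank = B.rank + 1 := by
  rw [rank, ← hB, finrank_sup_span_singleton ha, rank]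

end rank

section appendCol

variable {R : Type*} {n : Type*} {k : ℕ}

def appendCol (X : Matrix n (Fin k) R) (c : n → R) : Matrix n (Fin (k + 1)) R :=
  of fun i => Fin.snoc (X i) (c i)

theorem col_appendCol (X : Matrix n (Fin k) R) (c : n → R) :
    (appendCol X c).col = Fin.snoc X.col c := by
  ext j i
  induction j using Fin.lastCases <;> simp [appendCol, col, Fin.snoc]

theorem appendCol_mul_transpose [CommRing R] [Fintype n] (X : Matrix n (Fin k) R) (c : n → R) :
    appendCol X c * (appendCol X c)ᵀ = X * Xᵀ + vecMulVec c c := by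
  ext i j
  simp [appendCol, mul_apply, Fin.sum_univ_castSucc, vecMulVec_apply]

theorem range_mulVecLin_appendCol [CommRing R] [Fintype n] (X : Matrix n (Fin k) R)
    (c : n → R) :
    LinearMap.range (appendCol X c).mulVecLin = LinearMap.range X.mulVecLin ⊔ span R {c} := by
  rw [range_mulVecLin, range_mulVecLin, col_appendCol, Fin.range_snoc, span_insert, sup_comm]

theorem rank_appendCol_of_mem {K : Type*} [Field K] [Fintype n] {X : Matrix n (Fin k) K}
    {c : n → K} (hc : c ∈ LinearMap.range X.mulVecLin) : (appendCol X c).rank = X.rank := by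
  rw [rank, range_mulVecLin_appendCol, sup_eq_left.mpr ((span_singleton_le_iff_mem _ _).mpr hc),
    rank]

theorem rank_appendCol_of_notMem {K : Type*} [Field K] [Fintype n] {X : Matrix n (Fin k) K}
    {c : n → K} (hc : c ∉ LinearMap.range X.mulVecLin) : (appendCol X c).rank = X.rank + 1 :=
  rank_eq_rank_add_one_of_range (range_mulVecLin_appendCol X c).symm hc

end appendCol

section rankOneUpdate

variable {R : Type*} [CommRing R] {n : Type*} [Fintype n] {A : Matrix n n R}

theorem IsSymm.dotProduct_mulVec_comm (hA : A.IsSymm) (v w : n → R) :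
    v ⬝ᵥ (A *ᵥ w) = (A *ᵥ v) ⬝ᵥ w := by
  rw [dotProduct_mulVec, ← mulVec_transpose, hA.eq]

theorem range_sub_vecMulVec_mulVec_sup (A : Matrix n n R) (w : n → R) :
    LinearMap.range (A - vecMulVec (A *ᵥ w) (A *ᵥ w)).mulVecLin ⊔ span R {A *ᵥ w}
      = LinearMap.range A.mulVecLin := by
  rw [LinearMap.range_sup_eq_of_sub_mem, sup_eq_left, span_singleton_le_iff_mem]
  · exact LinearMap.mem_range_self _ w
  · intro x
    rw [mulVecLin_apply, mulVecLin_apply, sub_mulVec, vecMulVec_mulVec, op_smul_eq_smul,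
      sub_sub_cancel_left]
    exact neg_mem (smul_mem _ _ (mem_span_singleton_self _))

theorem range_sub_vecMulVec_mulVec_of_isotropic {u : n → R} (hu : (A *ᵥ u) ⬝ᵥ u = 0) :
    LinearMap.range (A - vecMulVec (A *ᵥ u) (A *ᵥ u)).mulVecLin
      = LinearMap.range A.mulVecLin := by
  rw [← range_sub_vecMulVec_mulVec_sup A u, eq_comm, sup_eq_left, span_singleton_le_iff_mem]
  exact ⟨u, by simp [vecMulVec_mulVec, hu]⟩

theorem dotProduct_sub_vecMulVec_mulVec (hA : A.IsSymm) {w : n → R}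
    (hw : w ⬝ᵥ (A *ᵥ w) = 1) (x : n → R) :
    w ⬝ᵥ ((A - vecMulVec (A *ᵥ w) (A *ᵥ w)) *ᵥ x) = 0 := by
  rw [sub_mulVec, vecMulVec_mulVec, op_smul_eq_smul, dotProduct_sub, dotProduct_smul, hw,
    hA.dotProduct_mulVec_comm, smul_eq_mul, mul_one, sub_self]

theorem mulVec_notMem_range_sub_vecMulVec [Nontrivial R] (hA : A.IsSymm) {w : n → R}
    (hw : w ⬝ᵥ (A *ᵥ w) = 1) :
    A *ᵥ w ∉ LinearMap.range (A - vecMulVec (A *ᵥ w) (A *ᵥ w)).mulVecLin := by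
  rintro ⟨x, hx⟩
  have h := dotProduct_sub_vecMulVec_mulVec hA hw x
  rw [← mulVecLin_apply, hx, hw] at h
  exact one_ne_zero h

theorem rank_sub_vecMulVec_mulVec {K : Type*} [Field K] {A : Matrix n n K} (hA : A.IsSymm)
    {w : n → K} (hw : w ⬝ᵥ (A *ᵥ w) = 1) :
    A.rank = (A - vecMulVec (A *ᵥ w) (A *ᵥ w)).rank + 1 :=
  rank_eq_rank_add_one_of_range (range_sub_vecMulVec_mulVec_sup A w)
    (mulVec_notMem_range_sub_vecMulVec hA hw)

end rankOneUpdate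

section alternating

variable {R : Type*} [CommRing R] {n : Type*} [Fintype n] {A : Matrix n n R}

theorem dotProduct_mulVec_of_transpose_eq_neg (hA : Aᵀ = -A) (v w : n → R) :
    v ⬝ᵥ (A *ᵥ w) = -((A *ᵥ v) ⬝ᵥ w) := by
  rw [dotProduct_mulVec, ← mulVec_transpose, hA, neg_mulVec, neg_dotProduct]

theorem range_sub_vecMulVec_add_vecMulVec_sup (A : Matrix n n R) (u v : n → R) :
    LinearMap.range
        (A - vecMulVec (A *ᵥ u) (A *ᵥ v) + vecMulVec (A *ᵥ v) (A *ᵥ u)).mulVecLin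
      ⊔ (span R {A *ᵥ u} ⊔ span R {A *ᵥ v}) = LinearMap.range A.mulVecLin := by
  rw [LinearMap.range_sup_eq_of_sub_mem, sup_eq_left, sup_le_iff, span_singleton_le_iff_mem,
    span_singleton_le_iff_mem]
  · exact ⟨LinearMap.mem_range_self _ u, LinearMap.mem_range_self _ v⟩
  · intro x
    rw [mulVecLin_apply, mulVecLin_apply, add_mulVec, sub_mulVec, vecMulVec_mulVec,
      vecMulVec_mulVec, op_smul_eq_smul, op_smul_eq_smul,
      show ∀ p q r : n → R, p - q + r - p = -q + r from fun _ _ _ => by abel]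
    exact add_mem_sup (neg_mem (smul_mem _ _ (mem_span_singleton_self _)))
      (smul_mem _ _ (mem_span_singleton_self _))

theorem dotProduct_sub_vecMulVec_add_vecMulVec (hA : Aᵀ = -A) {u v : n → R}
    (hu : u ⬝ᵥ (A *ᵥ u) = 0) (hv : v ⬝ᵥ (A *ᵥ v) = 0) (huv : u ⬝ᵥ (A *ᵥ v) = 1) (x : n → R) :
    u ⬝ᵥ ((A - vecMulVec (A *ᵥ u) (A *ᵥ v) + vecMulVec (A *ᵥ v) (A *ᵥ u)) *ᵥ x) = 0 ∧
      v ⬝ᵥ ((A - vecMulVec (A *ᵥ u) (A *ᵥ v) + vecMulVec (A *ᵥ v) (A *ᵥ u)) *ᵥ x) = 0 := by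
  have hvu : v ⬝ᵥ (A *ᵥ u) = -1 := by
    rw [dotProduct_mulVec_of_transpose_eq_neg hA, dotProduct_comm, huv]
  simp only [add_mulVec, sub_mulVec, vecMulVec_mulVec, op_smul_eq_smul, dotProduct_add,
    dotProduct_sub, dotProduct_smul, smul_eq_mul, hu, hv, huv, hvu,
    dotProduct_mulVec_of_transpose_eq_neg hA u x, dotProduct_mulVec_of_transpose_eq_neg hA v x]
  constructor <;> ring

variable {K : Type*} [Field K] {A : Matrix n n K}

theorem rank_sub_vecMulVec_add_vecMulVec (hA : Aᵀ = -A) {u v : n → K}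
    (hu : u ⬝ᵥ (A *ᵥ u) = 0) (hv : v ⬝ᵥ (A *ᵥ v) = 0) (huv : u ⬝ᵥ (A *ᵥ v) = 1) :
    A.rank = (A - vecMulVec (A *ᵥ u) (A *ᵥ v) + vecMulVec (A *ᵥ v) (A *ᵥ u)).rank + 2 := by
  set B := A - vecMulVec (A *ᵥ u) (A *ᵥ v) + vecMulVec (A *ᵥ v) (A *ᵥ u)
  have hBu : ∀ y ∈ LinearMap.range B.mulVecLin, u ⬝ᵥ y = 0 := by
    rintro _ ⟨x, rfl⟩
    exact (dotProduct_sub_vecMulVec_add_vecMulVec hA hu hv huv x).1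
  have hBv : ∀ y ∈ LinearMap.range B.mulVecLin, v ⬝ᵥ y = 0 := by
    rintro _ ⟨x, rfl⟩
    exact (dotProduct_sub_vecMulVec_add_vecMulVec hA hu hv huv x).2
  have ha : A *ᵥ u ∉ LinearMap.range B.mulVecLin := fun h => by
    have := hBv _ h
    rw [dotProduct_mulVec_of_transpose_eq_neg hA, dotProduct_comm, huv] at this
    exact neg_ne_zero.mpr one_ne_zero this
  have hb : A *ᵥ v ∉ LinearMap.range B.mulVecLin ⊔ span K {A *ᵥ u} := fun h => by
    obtain ⟨y, hy, z, hz, hyz⟩ := mem_sup.mp h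
    obtain ⟨t, rfl⟩ := mem_span_singleton.mp hz
    have := congrArg (u ⬝ᵥ ·) hyz
    simp only [dotProduct_add, dotProduct_smul, hBu y hy, hu, huv, smul_zero, zero_add] at this
    exact zero_ne_one this
  rw [rank, ← range_sub_vecMulVec_add_vecMulVec_sup A u v, ← sup_assoc,
    finrank_sup_span_singleton hb, finrank_sup_span_singleton ha, rank]

theorem even_rank_of_transpose_eq_neg (hA : Aᵀ = -A) (hdiag : ∀ i, A i i = 0) :
    Even A.rank := by
  classical
  induction hk : A.rank using Nat.strong_induction_on generalizing A with
  | _ k ih =>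
  by_cases hA0 : A = 0
  · rw [← hk, hA0, rank_zero]
    exact Even.zero
  obtain ⟨i, j, hij⟩ : ∃ i j, A i j ≠ 0 := by
    by_contra! h
    exact hA0 (Matrix.ext h)
  set u : n → K := Pi.single i 1
  set v : n → K := Pi.single j (A i j)⁻¹
  have hu : u ⬝ᵥ (A *ᵥ u) = 0 := by simp [u, mulVec_single, hdiag]
  have hv : v ⬝ᵥ (A *ᵥ v) = 0 := by simp [v, mulVec_single, hdiag]
  have huv : u ⬝ᵥ (A *ᵥ v) = 1 := by simp [u, v, mulVec_single, hij]
  set B := A - vecMulVec (A *ᵥ u) (A *ᵥ v) + vecMulVec (A *ᵥ v) (A *ᵥ u)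
  have hB : Bᵀ = -B := by
    simp only [B, transpose_add, transpose_sub, transpose_vecMulVec, hA]
    abel
  have hBdiag : ∀ i, B i i = 0 := by simp [B, hdiag, vecMulVec_apply, mul_comm]
  have hrank : k = B.rank + 2 := hk ▸ rank_sub_vecMulVec_add_vecMulVec hA hu hv huv
  rw [hrank]
  exact (ih B.rank (by omega) hB hBdiag rfl).add even_two

end alternating

section oddColumns

variable {R : Type*} [CommRing R] {n m : Type*} [Fintype m] {X : Matrix n m R}

theorem add_vecMulVec_one_mul_transpose (hX : X *ᵥ 1 = 0) (hm : (Fintype.card m : R) = 1)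
    (a : n → R) :
    (X + vecMulVec a 1) * (X + vecMulVec a 1)ᵀ = X * Xᵀ + vecMulVec a a := by
  rw [transpose_add, transpose_vecMulVec, Matrix.add_mul, Matrix.mul_add, Matrix.mul_add,
    mul_vecMulVec, hX, vecMulVec_mul, vecMul_transpose, hX, vecMulVec_mul_vecMulVec,
    one_dotProduct_one, hm, one_smul, zero_vecMulVec, vecMulVec_zero, add_zero, zero_add]

theorem range_mulVecLin_add_vecMulVec_one (hX : X *ᵥ 1 = 0) (hm : (Fintype.card m : R) = 1)
    (a : n → R) :
    LinearMap.range (X + vecMulVec a 1).mulVecLin = LinearMap.range X.mulVecLin ⊔ span R {a} := by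
  have hsup : LinearMap.range (X + vecMulVec a 1).mulVecLin ⊔ span R {a}
      = LinearMap.range X.mulVecLin ⊔ span R {a} := by
    refine LinearMap.range_sup_eq_of_sub_mem fun x => ?_
    rw [mulVecLin_apply, mulVecLin_apply, add_mulVec, vecMulVec_mulVec, op_smul_eq_smul,
      add_sub_cancel_left]
    exact smul_mem _ _ (mem_span_singleton_self _)
  rw [← hsup, eq_comm, sup_eq_left, span_singleton_le_iff_mem]
  refine ⟨1, ?_⟩
  rw [mulVecLin_apply, add_mulVec, hX, vecMulVec_mulVec, one_dotProduct_one, hm, op_smul_eq_smul,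
    one_smul, zero_add]

end oddColumns

section zmodTwo

theorem mul_transpose_apply_self_zmod_two {n m : Type*} [Fintype m] (X : Matrix n m (ZMod 2))
    (i : n) : (X * Xᵀ) i i = (X *ᵥ 1) i := by
  have hsq : ∀ x : ZMod 2, x * x = x := by decide
  simp [mul_apply, mulVec, dotProduct, hsq]

variable {n : Type*} [Fintype n]

theorem even_rank_of_isSymm_of_diag_eq_zero {A : Matrix n n (ZMod 2)} (hA : A.IsSymm)
    (hdiag : ∀ i, A i i = 0) : Even A.rank :=
  even_rank_of_transpose_eq_neg (by rw [hA.eq]; ext; simp [ZMod.neg_eq_self_mod_two]) hdiag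

theorem exists_eq_mul_transpose_of_diag_eq_zero {A : Matrix n n (ZMod 2)} {k : ℕ}
    (hA : A.IsSymm) (hrank : A.rank = k) (hdiag : ∀ i, A i i = 0)
    (factor : ∀ B : Matrix n n (ZMod 2), B.IsSymm → B.rank = k → (∃ i, B i i ≠ 0) →
      ∃ X : Matrix n (Fin k) (ZMod 2), X.rank = k ∧ B = X * Xᵀ) :
    ∃ X : Matrix n (Fin (k + 1)) (ZMod 2), X.rank = k ∧ A = X * Xᵀ := by
  classical
  by_cases hA0 : A = 0
  · refine ⟨0, ?_, by simp [hA0]⟩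
    rw [← hrank, hA0, rank_zero, rank_zero]
  obtain ⟨i, j, hij⟩ : ∃ i j, A i j ≠ 0 := by
    by_contra! h
    exact hA0 (Matrix.ext h)
  replace hij : A i j = 1 := Fin.eq_one_of_ne_zero _ hij
  have hji : A j i = 1 := (hA.apply i j).trans hij
  set u : n → ZMod 2 := Pi.single i 1 + Pi.single j 1
  set c := A *ᵥ u
  have hci : c i = 1 := by simp [c, u, mulVec_add, mulVec_single, hdiag, hij]
  have hcu : c ⬝ᵥ u = 0 := by
    simp [c, u, mulVec_add, mulVec_single, hdiag, hij, hji]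
    decide
  have hrange := range_sub_vecMulVec_mulVec_of_isotropic hcu
  have hBrank : (A - vecMulVec c c).rank = k := by rw [rank, hrange, ← rank, hrank]
  obtain ⟨X, hXrank, hBX⟩ := factor (A - vecMulVec c c) (hA.sub (transpose_vecMulVec c c))
    hBrank ⟨i, by simp [hdiag, vecMulVec_apply, hci]⟩
  refine ⟨appendCol X c, ?_, by rw [appendCol_mul_transpose, ← hBX, sub_add_cancel]⟩
  rw [rank_appendCol_of_mem, hXrank]
  rw [← range_mulVecLin_mul_of_rank_eq (by rw [← hBX, hBrank, hXrank]), ← hBX, hrange]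
  exact LinearMap.mem_range_self _ u

theorem exists_eq_mul_transpose_of_diag_ne_zero {k : ℕ} {A : Matrix n n (ZMod 2)}
    (hA : A.IsSymm) (hrank : A.rank = k) (hdiag : ∃ i, A i i ≠ 0) :
    ∃ X : Matrix n (Fin k) (ZMod 2), X.rank = k ∧ A = X * Xᵀ := by
  classical
  induction k generalizing A with
  | zero =>
    obtain ⟨i, hi⟩ := hdiag
    exact absurd (by simp [rank_eq_zero_iff.mp hrank]) hi
  | succ k ih =>
    obtain ⟨i, hi⟩ := hdiag
    replace hi : A i i = 1 := Fin.eq_one_of_ne_zero _ hi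
    set a := A *ᵥ Pi.single i 1
    set B := A - vecMulVec a a
    have hw : Pi.single i 1 ⬝ᵥ (A *ᵥ Pi.single i 1) = 1 := by simp [mulVec_single, hi]
    have hBrank : B.rank = k := by
      have : k + 1 = B.rank + 1 := hrank ▸ rank_sub_vecMulVec_mulVec hA hw
      omega
    have ha : a ∉ LinearMap.range B.mulVecLin := mulVec_notMem_range_sub_vecMulVec hA hw
    have hB : B.IsSymm := hA.sub (transpose_vecMulVec a a)
    by_cases hBdiag : ∃ j, B j j ≠ 0
    · obtain ⟨X, hXrank, hBX⟩ := ih hB hBrank hBdiag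
      rw [hBX, range_mulVecLin_mul_of_rank_eq (by rw [← hBX, hBrank, hXrank])] at ha
      refine ⟨appendCol X a, by rw [rank_appendCol_of_notMem ha, hXrank], ?_⟩
      rw [appendCol_mul_transpose, ← hBX, sub_add_cancel]
    · push Not at hBdiag
      obtain ⟨X, hXrank, hBX⟩ :=
        exists_eq_mul_transpose_of_diag_eq_zero hB hBrank hBdiag fun _ => ih
      rw [hBX, range_mulVecLin_mul_of_rank_eq (by rw [← hBX, hBrank, hXrank])] at ha
      have hX1 : X *ᵥ 1 = 0 := by
        ext j
        rw [← mul_transpose_apply_self_zmod_two, ← hBX, hBdiag, Pi.zero_apply]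
      have hodd : (Fintype.card (Fin (k + 1)) : ZMod 2) = 1 := by
        obtain ⟨r, hr⟩ := hBrank ▸ even_rank_of_isSymm_of_diag_eq_zero hB hBdiag
        simp [hr, ← two_mul, (by decide : (2 : ZMod 2) = 0)]
      refine ⟨X + vecMulVec a 1, ?_, ?_⟩
      · rw [rank_eq_rank_add_one_of_range (range_mulVecLin_add_vecMulVec_one hX1 hodd a).symm ha,
          hXrank]
      · rw [add_vecMulVec_one_mul_transpose hX1 hodd, ← hBX, sub_add_cancel]

end zmodTwo

end Matrix

theorem stmt7 (n k : ℕ) (A : Matrix (Fin n) (Fin n) (ZMod 2))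
    (hsymm : A.IsSymm) (hrank : A.rank = k) :
    (∃ X : Matrix (Fin n) (Fin k) (ZMod 2), X.rank = k ∧ A = X * Xᵀ) ∨
      (Even k ∧ ∃ X : Matrix (Fin n) (Fin (k + 1)) (ZMod 2), X.rank = k ∧ A = X * Xᵀ) := by
  by_cases hdiag : ∃ i, A i i ≠ 0
  · exact Or.inl (exists_eq_mul_transpose_of_diag_ne_zero hsymm hrank hdiag)
  · push Not at hdiag
    exact Or.inr ⟨hrank ▸ even_rank_of_isSymm_of_diag_eq_zero hsymm hdiag,
      exists_eq_mul_transpose_of_diag_eq_zero hsymm hrank hdiag fun _ =>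
        exists_eq_mul_transpose_of_diag_ne_zero⟩
end

section
/- Let G be a finite simple graph with at least one edge and let k = mr(G, F₂). Then c₂(G) ≠ k if and only if the adjacency matrix of G over F₂ (with all diagonal entries 0) has rank k and every other symmetric matrix over F₂ that fits G has rank strictly larger than k (i.e., the adjacency matrix is the unique matrix of rank k fitting G). -/
set_option linter.unusedSectionVars false
set_option maxHeartbeats 1000000


open Matrix

namespace SCSaux

variable {V : Type*} [Fintype V] [DecidableEq V]

lemma zmod2_cases (c : ZMod 2) : c = 0 ∨ c = 1 := by revert c; decide

lemma zmod2_add_self (c : ZMod 2) : c + c = 0 := by revert c; decide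

lemma zmod2_mul_self (c : ZMod 2) : c * c = c := by revert c; decide

lemma zmod2_ne_zero {c : ZMod 2} (h : c ≠ 0) : c = 1 := by revert h; revert c; decide

lemma natCast_eq_one_iff_odd (n : ℕ) : (n : ZMod 2) = 1 ↔ Odd n := by
  rw [Nat.odd_iff, ← ZMod.natCast_mod n 2]
  rcases Nat.mod_two_eq_zero_or_one n with h | h <;> rw [h] <;> decide

lemma vecMulVec_mulVec (x y z : V → ZMod 2) :
    vecMulVec x y *ᵥ z = (y ⬝ᵥ z) • x := by
  ext i
  simp [vecMulVec_apply, mulVec, dotProduct, Finset.mul_sum, mul_comm, mul_left_comm,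
    Pi.smul_apply, smul_eq_mul]

lemma vecMulVec_isSymm (x : V → ZMod 2) : (vecMulVec x x).IsSymm := by
  ext i j
  simp [vecMulVec_apply, mul_comm]

/-- The matrix `∑ x xᵀ` over a multiset of vectors. -/
def mOf (xs : Multiset (V → ZMod 2)) : Matrix V V (ZMod 2) :=
  (xs.map fun x => vecMulVec x x).sum

@[simp] lemma mOf_zero : mOf (0 : Multiset (V → ZMod 2)) = 0 := rfl

@[simp] lemma mOf_cons (x : V → ZMod 2) (xs : Multiset (V → ZMod 2)) :
    mOf (x ::ₘ xs) = vecMulVec x x + mOf xs := by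
  simp [mOf]

lemma mOf_apply (xs : Multiset (V → ZMod 2)) (u v : V) :
    mOf xs u v = (xs.map fun x => x u * x v).sum := by
  induction xs using Multiset.induction with
  | empty => simp
  | cons a s ih => simp [Matrix.add_apply, ih, vecMulVec_apply]

lemma mOf_isSymm (xs : Multiset (V → ZMod 2)) : (mOf xs).IsSymm := by
  ext i j
  rw [Matrix.transpose_apply, mOf_apply, mOf_apply]
  simp [mul_comm]

lemma mOf_mulVec (xs : Multiset (V → ZMod 2)) (z : V → ZMod 2) :
    mOf xs *ᵥ z = (xs.map fun x => (x ⬝ᵥ z) • x).sum := by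
  induction xs using Multiset.induction with
  | empty => simp
  | cons a s ih => simp [Matrix.add_mulVec, ih, vecMulVec_mulVec]


lemma rank_eq_zero_iff' {A : Matrix V V (ZMod 2)} : A.rank = 0 ↔ A = 0 := by
  constructor
  · intro h
    have h2 : LinearMap.range A.mulVecLin = ⊥ := Submodule.finrank_eq_zero.mp h
    have h3 : A.mulVecLin = 0 := LinearMap.range_eq_bot.mp h2
    ext i j
    have h4 := congrFun (congrArg DFunLike.coe h3) (Pi.single j 1)
    have h5 := congrFun h4 i
    simpa [Matrix.mulVecLin_apply, Matrix.mulVec_single_one] using h5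
  · rintro rfl; simp

lemma rank_pos_of_ne_zero {A : Matrix V V (ZMod 2)} (h : A ≠ 0) : 0 < A.rank := by
  rcases Nat.eq_zero_or_pos A.rank with h0 | h0
  · exact absurd (rank_eq_zero_iff'.mp h0) h
  · exact h0

lemma sum_mem_span (xs : Multiset (V → ZMod 2)) (z : V → ZMod 2)
    (S : Submodule (ZMod 2) (V → ZMod 2)) (hS : ∀ x ∈ xs, x ∈ S) :
    (xs.map fun x => (x ⬝ᵥ z) • x).sum ∈ S := by
  induction xs using Multiset.induction with
  | empty => simp
  | cons a s ih =>
    simp only [Multiset.map_cons, Multiset.sum_cons]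
    exact S.add_mem (S.smul_mem _ (hS a (Multiset.mem_cons_self a s)))
      (ih fun x hx => hS x (Multiset.mem_cons_of_mem hx))

lemma rank_le_of_range_le_span (A : Matrix V V (ZMod 2)) (t : Finset (V → ZMod 2))
    (h : ∀ z, A *ᵥ z ∈ Submodule.span (ZMod 2) (↑t : Set (V → ZMod 2))) :
    A.rank ≤ t.card := by
  have hle : LinearMap.range A.mulVecLin ≤ Submodule.span (ZMod 2) (↑t : Set (V → ZMod 2)) := by
    rintro y ⟨z, rfl⟩
    exact h z
  calc A.rank ≤ Module.finrank (ZMod 2) (Submodule.span (ZMod 2) (↑t : Set (V → ZMod 2))) :=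
        Submodule.finrank_mono hle
    _ ≤ t.card := finrank_span_finset_le_card t

lemma rank_mOf_le (xs : Multiset (V → ZMod 2)) :
    (mOf xs).rank ≤ Multiset.card xs := by
  refine le_trans (rank_le_of_range_le_span _ xs.toFinset ?_) ?_
  · intro z
    rw [mOf_mulVec]
    exact sum_mem_span xs z _ fun x hx => Submodule.subset_span (by simpa using hx)
  · exact Multiset.toFinset_card_le xs

lemma rank_mOf_lt (x₀ : V → ZMod 2) (t : Multiset (V → ZMod 2))
    (h : (x₀ ::ₘ t).sum = 0) :
    (mOf (x₀ ::ₘ t)).rank ≤ Multiset.card t := by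
  have hx₀ : x₀ = t.sum := by
    have h1 : x₀ + t.sum = 0 := by simpa using h
    have := congrArg (fun y => x₀ + y) h1.symm
    funext v
    have h2 := congrFun h1 v
    rcases zmod2_cases (x₀ v) with hv | hv <;> rcases zmod2_cases (t.sum v) with hw | hw <;>
      simp [hv, hw, Pi.add_apply] at h2 ⊢ <;> simp [hv, hw] at h2 ⊢
  have hx₀mem : x₀ ∈ Submodule.span (ZMod 2) (↑t.toFinset : Set (V → ZMod 2)) := by
    rw [hx₀]
    exact multiset_sum_mem _ fun x hx => Submodule.subset_span (by simpa using hx)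
  refine le_trans (rank_le_of_range_le_span _ t.toFinset ?_) (Multiset.toFinset_card_le t)
  intro z
  rw [mOf_mulVec]
  refine sum_mem_span _ z _ fun x hx => ?_
  rcases Multiset.mem_cons.mp hx with rfl | hx
  · exact hx₀mem
  · exact Submodule.subset_span (by simpa using hx)

/-- Bilinear form notation. -/
def bil (A : Matrix V V (ZMod 2)) (u v : V → ZMod 2) : ZMod 2 := u ⬝ᵥ (A *ᵥ v)

lemma bil_comm {A : Matrix V V (ZMod 2)} (hA : A.IsSymm) (u v : V → ZMod 2) :
    bil A u v = bil A v u := by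
  unfold bil
  rw [Matrix.dotProduct_mulVec, dotProduct_comm]
  congr 1
  rw [← Matrix.mulVec_transpose, hA]

lemma step {A : Matrix V V (ZMod 2)} (hA : A.IsSymm) {w : V → ZMod 2}
    (hw : w ⬝ᵥ (A *ᵥ w) = 1) :
    (A + vecMulVec (A *ᵥ w) (A *ᵥ w)).IsSymm ∧
      A = (A + vecMulVec (A *ᵥ w) (A *ᵥ w)) + vecMulVec (A *ᵥ w) (A *ᵥ w) ∧
      (A + vecMulVec (A *ᵥ w) (A *ᵥ w)).rank < A.rank := by
  set x := A *ᵥ w with hx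
  set B := A + vecMulVec x x with hB
  have hxw : x ⬝ᵥ w = 1 := by rw [dotProduct_comm]; exact hw
  have hBsymm : B.IsSymm := by
    unfold Matrix.IsSymm at hA ⊢
    rw [hB, Matrix.transpose_add, hA, (vecMulVec_isSymm x)]
  have hAB : A = B + vecMulVec x x := by
    rw [hB, add_assoc]
    ext i j
    simp [Matrix.add_apply, zmod2_add_self]
  have hBw : B *ᵥ w = 0 := by
    rw [hB, Matrix.add_mulVec, vecMulVec_mulVec, hxw, one_smul, ← hx]
    funext i
    exact zmod2_add_self (x i)
  have hxnotB : x ∉ LinearMap.range B.mulVecLin := by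
    rintro ⟨z, hz⟩
    rw [Matrix.mulVecLin_apply] at hz
    have h1 : w ⬝ᵥ x = 0 := by
      rw [← hz, Matrix.dotProduct_mulVec, ← Matrix.mulVec_transpose, hBsymm, hBw]
      simp
    rw [dotProduct_comm] at h1
    rw [hxw] at h1
    exact one_ne_zero h1
  have hxA : x ∈ LinearMap.range A.mulVecLin := ⟨w, by rw [Matrix.mulVecLin_apply]⟩
  have hle : LinearMap.range B.mulVecLin ≤ LinearMap.range A.mulVecLin := by
    rintro y ⟨z, rfl⟩
    refine ⟨z + (x ⬝ᵥ z) • w, ?_⟩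
    rw [Matrix.mulVecLin_apply, Matrix.mulVecLin_apply, Matrix.mulVec_add,
      Matrix.mulVec_smul, ← hx, hB, Matrix.add_mulVec, vecMulVec_mulVec]
  have hlt : LinearMap.range B.mulVecLin < LinearMap.range A.mulVecLin :=
    lt_of_le_of_ne hle (fun h => hxnotB (h ▸ hxA))
  exact ⟨hBsymm, hAB, Submodule.finrank_lt_finrank_of_lt hlt⟩

lemma bil_add_left (A : Matrix V V (ZMod 2)) (u v w : V → ZMod 2) :
    bil A (u + v) w = bil A u w + bil A v w := by
  simp [bil, add_dotProduct]

lemma bil_add_right (A : Matrix V V (ZMod 2)) (u v w : V → ZMod 2) :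
    bil A u (v + w) = bil A u v + bil A u w := by
  simp [bil, Matrix.mulVec_add, dotProduct_add]

lemma bil_smul_left (A : Matrix V V (ZMod 2)) (c : ZMod 2) (u v : V → ZMod 2) :
    bil A (c • u) v = c * bil A u v := by
  simp [bil, smul_dotProduct]

lemma bil_smul_right (A : Matrix V V (ZMod 2)) (c : ZMod 2) (u v : V → ZMod 2) :
    bil A u (c • v) = c * bil A u v := by
  simp [bil, Matrix.mulVec_smul, dotProduct_smul]

lemma bil_step (A : Matrix V V (ZMod 2)) (w z y : V → ZMod 2) :
    bil (A + vecMulVec (A *ᵥ w) (A *ᵥ w)) z y = bil A z y + bil A z w * bil A y w := by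
  unfold bil
  rw [Matrix.add_mulVec, vecMulVec_mulVec, dotProduct_add, dotProduct_smul]
  congr 1
  rw [smul_eq_mul]
  rw [show (A *ᵥ w) ⬝ᵥ y = y ⬝ᵥ (A *ᵥ w) from dotProduct_comm _ _]
  ring

lemma choose_pivot {A : Matrix V V (ZMod 2)} (hA : A.IsSymm) {w₀ : V → ZMod 2}
    (h1 : bil A w₀ w₀ = 1) :
    ∃ w, bil A w w = 1 ∧
      (A + vecMulVec (A *ᵥ w) (A *ᵥ w) = 0 ∨
        ∃ z, bil (A + vecMulVec (A *ᵥ w) (A *ᵥ w)) z z = 1) := by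
  by_cases hc : A + vecMulVec (A *ᵥ w₀) (A *ᵥ w₀) = 0 ∨
      ∃ z, bil (A + vecMulVec (A *ᵥ w₀) (A *ᵥ w₀)) z z = 1
  · exact ⟨w₀, h1, hc⟩
  push_neg at hc
  obtain ⟨hB0, hAlt⟩ := hc
  set B₀ := A + vecMulVec (A *ᵥ w₀) (A *ᵥ w₀) with hB₀def
  have hAlt' : ∀ z, bil B₀ z z = 0 := fun z => (zmod2_cases _).resolve_right (hAlt z)
  -- find a nonzero entry
  have hij : ∃ i j, B₀ i j = 1 := by
    by_contra hcon
    push_neg at hcon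
    apply hB0
    ext i j
    rcases zmod2_cases (B₀ i j) with h | h
    · exact h
    · exact absurd h (hcon i j)
  obtain ⟨i, j, hij⟩ := hij
  set u : V → ZMod 2 := Pi.single i 1 with hu
  set t : V → ZMod 2 := Pi.single j 1 with ht
  have hbut : bil B₀ u t = 1 := by
    unfold bil
    rw [ht, Matrix.mulVec_single_one, hu, single_dotProduct, one_mul]
    exact hij
  set c := bil A u w₀ with hcdef
  set d := bil A t w₀ with hddef
  have huu : bil A u u = c * c := by
    have h2 := hAlt' u
    rw [hB₀def, bil_step] at h2
    rw [← hcdef] at h2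
    rcases zmod2_cases (bil A u u) with h | h <;> rcases zmod2_cases c with h' | h' <;>
      rw [h, h'] at h2 ⊢ <;> first | rfl | (exfalso; revert h2; decide)
  have htt : bil A t t = d * d := by
    have h2 := hAlt' t
    rw [hB₀def, bil_step] at h2
    rw [← hddef] at h2
    rcases zmod2_cases (bil A t t) with h | h <;> rcases zmod2_cases d with h' | h' <;>
      rw [h, h'] at h2 ⊢ <;> first | rfl | (exfalso; revert h2; decide)
  have hut : bil A u t = 1 + c * d := by
    have h2 := hbut
    rw [hB₀def, bil_step] at h2
    rw [← hcdef, ← hddef] at h2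
    rcases zmod2_cases (bil A u t) with h | h <;> rcases zmod2_cases c with h' | h' <;>
      rcases zmod2_cases d with h'' | h'' <;>
      rw [h, h', h''] at h2 ⊢ <;> first | rfl | (exfalso; revert h2; decide)
  refine ⟨w₀ + u + c • w₀, ?_, Or.inr ⟨w₀ + t + d • w₀, ?_⟩⟩
  · simp only [bil_add_left, bil_add_right, bil_smul_left, bil_smul_right]
    rw [bil_comm hA w₀ u, huu, h1, ← hcdef]
    rcases zmod2_cases c with hc0 | hc0 <;> rw [hc0] <;> decide
  · rw [bil_step]
    simp only [bil_add_left, bil_add_right, bil_smul_left, bil_smul_right]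
    rw [bil_comm hA w₀ u, bil_comm hA w₀ t, bil_comm hA t u, htt, hut, h1,
      ← hcdef, ← hddef]
    rcases zmod2_cases c with hc0 | hc0 <;> rcases zmod2_cases d with hd0 | hd0 <;>
      rw [hc0, hd0] <;> decide

lemma bil_single (A : Matrix V V (ZMod 2)) (u : V) :
    bil A (Pi.single u 1) (Pi.single u 1) = A u u := by
  unfold bil
  rw [Matrix.mulVec_single_one, single_dotProduct, one_mul]
  rfl

lemma bil_zero (w : V → ZMod 2) : bil (0 : Matrix V V (ZMod 2)) w w = 0 := by
  simp [bil]

lemma decomp : ∀ (r : ℕ) (A : Matrix V V (ZMod 2)), A.IsSymm → A.rank ≤ r →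
    (∃ w, bil A w w = 1) →
    ∃ xs : Multiset (V → ZMod 2), Multiset.card xs ≤ r ∧ mOf xs = A := by
  intro r
  induction r with
  | zero =>
    intro A hA hr ⟨w, hw⟩
    exfalso
    have hA0 : A = 0 := rank_eq_zero_iff'.mp (Nat.le_zero.mp hr)
    rw [hA0, bil_zero] at hw
    exact zero_ne_one hw
  | succ n ih =>
    intro A hA hr ⟨w₀, hw₀⟩
    obtain ⟨w, hww, hcase⟩ := choose_pivot hA hw₀
    obtain ⟨hBs, hAB, hBr⟩ := step hA hww
    set x := A *ᵥ w with hx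
    set B := A + vecMulVec x x with hB
    have hBrank : B.rank ≤ n := Nat.lt_succ_iff.mp (lt_of_lt_of_le hBr hr)
    rcases hcase with hB0 | ⟨z, hz⟩
    · refine ⟨{x}, by simp, ?_⟩
      have : mOf {x} = vecMulVec x x := by simp [mOf]
      rw [this, hAB, hB0, zero_add]
    · obtain ⟨ys, hcard, hmOf⟩ := ih B hBs hBrank ⟨z, hz⟩
      refine ⟨x ::ₘ ys, ?_, ?_⟩
      · simpa using Nat.succ_le_succ hcard
      · rw [mOf_cons, hmOf, add_comm, ← hAB]


section Glue
variable {V : Type*} [Fintype V] [DecidableEq V] (G : SimpleGraph V) [DecidableRel G.Adj]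

/-- indicator vector of a finite set -/
def toVec (C : Finset V) : V → ZMod 2 := fun v => if v ∈ C then 1 else 0

/-- support of a vector -/
def toSet (x : V → ZMod 2) : Finset V := Finset.univ.filter (fun v => x v = 1)

lemma mem_toSet (x : V → ZMod 2) (v : V) : v ∈ toSet x ↔ x v = 1 := by
  simp [toSet]

lemma toVec_eq_one (C : Finset V) (v : V) : toVec C v = 1 ↔ v ∈ C := by
  by_cases h : v ∈ C <;> simp [toVec, h]

lemma sum_map_eq_card {α : Type*} (xs : Multiset α) (f : α → ZMod 2)
    (p : α → Prop) [DecidablePred p] (hp : ∀ a, f a = 1 ↔ p a) :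
    (xs.map f).sum = ((xs.filter p).card : ZMod 2) := by
  induction xs using Multiset.induction with
  | empty => simp
  | cons a s ih =>
    by_cases h : p a
    · rw [Multiset.map_cons, Multiset.sum_cons, Multiset.filter_cons_of_pos _ h,
        Multiset.card_cons, ih, (hp a).mpr h]
      push_cast
      ring
    · rw [Multiset.map_cons, Multiset.sum_cons, Multiset.filter_cons_of_neg _ h, ih]
      have hfa : f a = 0 := by
        rcases zmod2_cases (f a) with h0 | h0
        · exact h0
        · exact absurd ((hp a).mp h0) h
      rw [hfa, zero_add]

lemma mOf_entry_eq_card (xs : Multiset (V → ZMod 2)) (u v : V) :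
    mOf xs u v = ((xs.filter (fun x => x u = 1 ∧ x v = 1)).card : ZMod 2) := by
  rw [mOf_apply]
  refine sum_map_eq_card xs _ _ (fun x => ?_)
  rcases zmod2_cases (x u) with h0 | h0 <;> rcases zmod2_cases (x v) with h1 | h1 <;>
    rw [h0, h1] <;> simp

/-- From a decomposition of a fitting matrix, build an SCS. -/
lemma isSCS_of_mOf (xs : Multiset (V → ZMod 2)) (hfit : FitsF2 G (mOf xs)) :
    IsSCS G (xs.map toSet) := by
  intro u v huv
  rw [← hfit.2 u v huv]
  have hc : ((xs.map toSet).filter (fun C => u ∈ C ∧ v ∈ C)).card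
      = (xs.filter (fun x => x u = 1 ∧ x v = 1)).card := by
    rw [Multiset.filter_map, Multiset.card_map]
    congr 1
    apply Multiset.filter_congr
    intro x _
    simp [Function.comp, mem_toSet]
  rw [hc, mOf_entry_eq_card, natCast_eq_one_iff_odd]

/-- From an SCS, build the fitting matrix. -/
lemma fits_of_isSCS (𝒞 : Multiset (Finset V)) (hscs : IsSCS G 𝒞) :
    FitsF2 G (mOf (𝒞.map toVec)) := by
  refine ⟨mOf_isSymm _, fun u v huv => ?_⟩
  rw [mOf_entry_eq_card]
  have hc : ((𝒞.map toVec).filter (fun x => x u = 1 ∧ x v = 1)).card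
      = (𝒞.filter (fun C => u ∈ C ∧ v ∈ C)).card := by
    rw [Multiset.filter_map, Multiset.card_map]
    congr 1
    apply Multiset.filter_congr
    intro C _
    simp [Function.comp, toVec_eq_one]
  rw [hc, natCast_eq_one_iff_odd]
  exact (hscs u v huv).symm

lemma multiset_sum_apply (xs : Multiset (V → ZMod 2)) (u : V) :
    xs.sum u = (xs.map (fun x => x u)).sum := by
  induction xs using Multiset.induction with
  | empty => rfl
  | cons a s ih => simp [ih]

lemma sum_eq_zero_of_diag_zero (xs : Multiset (V → ZMod 2))
    (h : ∀ u : V, mOf xs u u = 0) : xs.sum = 0 := by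
  funext u
  rw [multiset_sum_apply]
  have h2 := h u
  rw [mOf_apply] at h2
  have h3 : (xs.map fun x => x u * x u) = xs.map fun x => x u :=
    Multiset.map_congr rfl (fun x _ => zmod2_mul_self (x u))
  rw [h3] at h2
  exact h2

lemma adjMatrix_fits : FitsF2 G (G.adjMatrix (ZMod 2)) := by
  refine ⟨G.isSymm_adjMatrix, fun u v huv => ?_⟩
  by_cases h : G.Adj u v <;> simp [SimpleGraph.adjMatrix_apply, h]

end Glue

end SCSaux

theorem stmt9 {V : Type*} [Fintype V] [DecidableEq V] (G : SimpleGraph V)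
    [DecidableRel G.Adj] (hne : ∃ u v : V, G.Adj u v) (k : ℕ) (hk : mrF2 G = k) :
    c2 G ≠ k ↔
      ((G.adjMatrix (ZMod 2)).rank = k ∧
        ∀ A : Matrix V V (ZMod 2), FitsF2 G A → A ≠ G.adjMatrix (ZMod 2) → k < A.rank) := by
  classical
  have hadj : FitsF2 G (G.adjMatrix (ZMod 2)) := SCSaux.adjMatrix_fits G
  have hne' : {m | ∃ A : Matrix V V (ZMod 2), FitsF2 G A ∧ A.rank = m}.Nonempty :=
    ⟨_, _, hadj, rfl⟩
  have hk_le : ∀ A : Matrix V V (ZMod 2), FitsF2 G A → k ≤ A.rank := by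
    intro A hA
    rw [← hk]
    exact Nat.sInf_le ⟨A, hA, rfl⟩
  obtain ⟨u₀, v₀, huv₀⟩ := hne
  have hne_uv : u₀ ≠ v₀ := G.ne_of_adj huv₀
  have hfit_ne : ∀ A : Matrix V V (ZMod 2), FitsF2 G A → A ≠ 0 := by
    intro A hA h0
    have h1 : A u₀ v₀ = 1 := (hA.2 _ _ hne_uv).mpr huv₀
    rw [h0] at h1
    simpa using h1
  have hmin : ∃ A : Matrix V V (ZMod 2), FitsF2 G A ∧ A.rank = k := by
    rw [← hk]
    exact Nat.sInf_mem hne'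
  have hkpos : 0 < k := by
    obtain ⟨A₀, hA₀, hr₀⟩ := hmin
    rw [← hr₀]
    exact SCSaux.rank_pos_of_ne_zero (hfit_ne _ hA₀)
  have hscs_ge : ∀ 𝒞 : Multiset (Finset V), IsSCS G 𝒞 → k ≤ Multiset.card 𝒞 := by
    intro 𝒞 h
    have hfit := SCSaux.fits_of_isSCS G 𝒞 h
    calc k ≤ (SCSaux.mOf (𝒞.map SCSaux.toVec)).rank := hk_le _ hfit
      _ ≤ Multiset.card (𝒞.map SCSaux.toVec) := SCSaux.rank_mOf_le _
      _ = Multiset.card 𝒞 := Multiset.card_map _ _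
  have hdiag : ∀ A : Matrix V V (ZMod 2), FitsF2 G A → A ≠ G.adjMatrix (ZMod 2) →
      ∃ u, A u u = 1 := by
    intro A hA hne2
    by_contra hcon
    push_neg at hcon
    apply hne2
    ext u v
    by_cases huv : u = v
    · subst huv
      have h1 : A u u = 0 := by
        rcases SCSaux.zmod2_cases (A u u) with h | h
        · exact h
        · exact absurd h (hcon u)
      rw [h1]
      simp
    · rcases SCSaux.zmod2_cases (A u v) with h | h
      · rw [h]
        have hnadj : ¬ G.Adj u v := fun hadj2 => by
          have h2 := (hA.2 u v huv).mpr hadj2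
          rw [h] at h2
          simp at h2
        simp [SimpleGraph.adjMatrix_apply, hnadj]
      · rw [h]
        have hadj2 := (hA.2 u v huv).mp h
        simp [SimpleGraph.adjMatrix_apply, hadj2]
  have hclaim : ∀ A : Matrix V V (ZMod 2), FitsF2 G A → A ≠ G.adjMatrix (ZMod 2) →
      A.rank = k → c2 G = k := by
    intro A hA hne2 hr
    obtain ⟨u, hu⟩ := hdiag A hA hne2
    have hbil : SCSaux.bil A (Pi.single u 1) (Pi.single u 1) = 1 := by
      rw [SCSaux.bil_single]
      exact hu
    obtain ⟨xs, hcard, hmOf⟩ := SCSaux.decomp A.rank A hA.1 le_rfl ⟨_, hbil⟩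
    have hscs : IsSCS G (xs.map SCSaux.toSet) := SCSaux.isSCS_of_mOf G xs (by rw [hmOf]; exact hA)
    have hmem : Multiset.card (xs.map SCSaux.toSet) ∈
        {m | ∃ 𝒞 : Multiset (Finset V), IsSCS G 𝒞 ∧ Multiset.card 𝒞 = m} := ⟨_, hscs, rfl⟩
    have hle : c2 G ≤ k := by
      refine le_trans (Nat.sInf_le hmem) ?_
      rw [Multiset.card_map]
      exact hcard.trans (le_of_eq hr)
    have hge : k ≤ c2 G := by
      have hne3 : {m | ∃ 𝒞 : Multiset (Finset V), IsSCS G 𝒞 ∧ Multiset.card 𝒞 = m}.Nonempty :=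
        ⟨_, hmem⟩
      obtain ⟨𝒞₀, h𝒞₀, hc₀⟩ := Nat.sInf_mem hne3
      calc k ≤ Multiset.card 𝒞₀ := hscs_ge _ h𝒞₀
        _ = c2 G := hc₀
    exact le_antisymm hle hge
  constructor
  · intro hc2
    have hnoA : ∀ A : Matrix V V (ZMod 2), FitsF2 G A → A ≠ G.adjMatrix (ZMod 2) →
        A.rank ≠ k := fun A hA h2 hr => hc2 (hclaim A hA h2 hr)
    obtain ⟨A₀, hA₀, hr₀⟩ := hmin
    have hA₀adj : A₀ = G.adjMatrix (ZMod 2) := by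
      by_contra h2
      exact hnoA A₀ hA₀ h2 hr₀
    refine ⟨by rw [← hA₀adj]; exact hr₀, fun A hA h2 => ?_⟩
    exact lt_of_le_of_ne (hk_le A hA) (Ne.symm (hnoA A hA h2))
  · rintro ⟨hadjrank, hgt⟩ hc2
    have hSne : {m | ∃ 𝒞 : Multiset (Finset V), IsSCS G 𝒞 ∧ Multiset.card 𝒞 = m}.Nonempty := by
      by_contra h
      rw [Set.not_nonempty_iff_eq_empty] at h
      have : c2 G = 0 := by
        rw [c2, h]
        simp
      omega
    have hkmem := Nat.sInf_mem hSne
    have hc2' : sInf {m | ∃ 𝒞 : Multiset (Finset V), IsSCS G 𝒞 ∧ Multiset.card 𝒞 = m} = k := hc2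
    rw [hc2'] at hkmem
    obtain ⟨𝒞, hscs, hcard⟩ := hkmem
    have hfit := SCSaux.fits_of_isSCS G 𝒞 hscs
    have hcardxs : Multiset.card (𝒞.map SCSaux.toVec) = k := by
      rw [Multiset.card_map, hcard]
    have hrle : (SCSaux.mOf (𝒞.map SCSaux.toVec)).rank ≤ k := by
      rw [← hcardxs]
      exact SCSaux.rank_mOf_le _
    have hradj : SCSaux.mOf (𝒞.map SCSaux.toVec) = G.adjMatrix (ZMod 2) := by
      by_contra h2
      exact absurd (lt_of_lt_of_le (hgt _ hfit h2) hrle) (lt_irrefl k)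
    have hdiag0 : ∀ u : V, SCSaux.mOf (𝒞.map SCSaux.toVec) u u = 0 := by
      intro u
      rw [hradj]
      simp
    have hsum0 := SCSaux.sum_eq_zero_of_diag_zero _ hdiag0
    obtain ⟨x₀, t, hxt⟩ : ∃ x₀ t, 𝒞.map SCSaux.toVec = x₀ ::ₘ t := by
      rcases Multiset.empty_or_exists_mem (𝒞.map SCSaux.toVec) with h | ⟨a, ha⟩
      · rw [h] at hcardxs
        simp at hcardxs
        omega
      · exact ⟨a, (𝒞.map SCSaux.toVec).erase a, (Multiset.cons_erase ha).symm⟩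
    have hlt := SCSaux.rank_mOf_lt x₀ t (by rw [← hxt]; exact hsum0)
    rw [← hxt, hradj, hadjrank] at hlt
    have hct : Multiset.card t + 1 = k := by
      have := congrArg Multiset.card hxt
      rw [hcardxs] at this
      simp at this
      omega
    omega
end

section
/- Let G be a finite simple graph with c₂(G) even and positive, and let 𝒞 be a subgraph complementation system for G of cardinality c₂(G). Then there exists a vertex v of G that appears in 𝒞 an odd number of times. -/
open Matrix

open Module Submodule

set_option linter.unusedSectionVars false



section Helpers
variable {V : Type*} [Fintype V] [DecidableEq V]

lemma odd_iff_cast (n : ℕ) : Odd n ↔ (n : ZMod 2) = 1 := by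
  rw [Nat.odd_iff, ← ZMod.natCast_mod]
  rcases Nat.mod_two_eq_zero_or_one n with h | h <;> simp [h] <;> decide

lemma card_filter_cast {α : Type*} (p : α → Prop) [DecidablePred p] (s : Multiset α) :
    ((Multiset.card (s.filter p) : ZMod 2)) = (s.map fun a => if p a then (1 : ZMod 2) else 0).sum := by
  induction s using Multiset.induction with
  | empty => simp
  | cons a s ih =>
    by_cases h : p a <;> simp [Multiset.filter_cons, h, ih, add_comm]

lemma multiset_sum_apply {R : Type*} [AddCommMonoid R] (m : Multiset (V → R)) (i : V) :
    m.sum i = (m.map fun w => w i).sum := by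
  induction m using Multiset.induction with
  | empty => simp
  | cons a s ih => simp [ih]

noncomputable def S (t : Multiset (V → ZMod 2)) : Matrix V V (ZMod 2) :=
  (t.map (fun w => vecMulVec w w)).sum

lemma S_apply (t : Multiset (V → ZMod 2)) (i j : V) :
    S t i j = (t.map (fun w => w i * w j)).sum := by
  induction t using Multiset.induction with
  | empty => simp [S]
  | cons w t ih => simp [S, Multiset.map_cons, Multiset.sum_cons, Matrix.add_apply,
      vecMulVec_apply] at ih ⊢; rw [ih]

lemma S_cons (w : V → ZMod 2) (t : Multiset (V → ZMod 2)) :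
    S (w ::ₘ t) = vecMulVec w w + S t := by
  simp [S]

noncomputable def colSpace (B : Matrix V V (ZMod 2)) : Submodule (ZMod 2) (V → ZMod 2) :=
  Submodule.span (ZMod 2) (Set.range (fun j => fun i => B i j))

lemma col_mem_colSpace (B : Matrix V V (ZMod 2)) (j : V) :
    (fun i => B i j) ∈ colSpace B := subset_span ⟨j, rfl⟩

lemma colSpace_zero : colSpace (0 : Matrix V V (ZMod 2)) = ⊥ := by
  rw [colSpace, eq_bot_iff]
  refine span_le.2 ?_
  rintro x ⟨j, rfl⟩
  simp [Matrix.zero_apply]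
  rfl

end Helpers

section Main
variable {V : Type*} [Fintype V] [DecidableEq V]

lemma alt_decomp : ∀ (d : ℕ) (B : Matrix V V (ZMod 2)),
    Module.finrank (ZMod 2) (colSpace B) ≤ d →
    (∀ i j, B i j = B j i) → (∀ i, B i i = 0) →
    Even (Module.finrank (ZMod 2) (colSpace B)) ∧
    ∀ a : V → ZMod 2, ∃ t : Multiset (V → ZMod 2),
      Multiset.card t ≤ Module.finrank (ZMod 2) (colSpace B) + 1 ∧
      vecMulVec a a + B = S t := by
  intro d
  induction d using Nat.strong_induction_on with
  | _ d ih =>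
  intro B hd hsym hdiag
  by_cases hB : B = 0
  · subst hB
    rw [colSpace_zero, finrank_bot]
    refine ⟨Even.zero, fun a => ⟨{a}, by simp, ?_⟩⟩
    simp [S]
  · -- find a nonzero off-diagonal entry
    have hex : ∃ y z, B y z ≠ 0 := by
      by_contra h
      push_neg at h
      exact hB (by ext i j; simpa using h i j)
    obtain ⟨y, z, hyz⟩ := hex
    have Byz : B y z = 1 := by
      revert hyz; generalize B y z = x; revert x; decide
    have hne : y ≠ z := fun h => hyz (by rw [h]; exact hdiag z)
    set p : V → ZMod 2 := fun i => B i y with hp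
    set q : V → ZMod 2 := fun i => B i z with hq
    set B2 : Matrix V V (ZMod 2) := Matrix.of fun i j => B i j + p i * q j + q i * p j with hB2
    have hB2app : ∀ i j, B2 i j = B i j + p i * q j + q i * p j := fun i j => rfl
    have hsym2 : ∀ i j, B2 i j = B2 j i := by
      intro i j
      simp only [hB2app]
      rw [hsym i j]; ring
    have hdiag2 : ∀ i, B2 i i = 0 := by
      intro i
      simp only [hB2app, hdiag i]
      have h2 : ∀ x y : ZMod 2, 0 + x * y + y * x = 0 := by decide
      exact h2 _ _
    have py : p y = 0 := hdiag y
    have pz : p z = 1 := by show B z y = 1; rw [hsym z y, Byz]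
    have qy : q y = 1 := Byz
    have qz : q z = 0 := hdiag z
    have pq0 : ∀ x u v : ZMod 2, x + u * v + v * u = x := by decide
    have rowy : ∀ w, B2 y w = 0 := by
      intro w
      have hpw : p w = B y w := hsym w y
      simp only [hB2app, py, qy, hpw]
      have : ∀ x u : ZMod 2, x + 0 * u + 1 * x = 0 := by decide
      exact this _ _
    have rowz : ∀ w, B2 z w = 0 := by
      intro w
      have hqw : q w = B z w := hsym w z
      simp only [hB2app, pz, qz, hqw]
      have : ∀ x u : ZMod 2, x + 1 * x + 0 * u = 0 := by decide
      exact this _ _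
    -- column relations
    have pmem : p ∈ colSpace B := col_mem_colSpace B y
    have qmem : q ∈ colSpace B := col_mem_colSpace B z
    have colrel2 : ∀ w, (fun i => B2 i w) = (fun i => B i w) + q w • p + p w • q := by
      intro w
      funext i
      simp only [Pi.add_apply, Pi.smul_apply, smul_eq_mul, hB2app]
      ring
    have colrel : ∀ w, (fun i => B i w) = (fun i => B2 i w) + q w • p + p w • q := by
      intro w
      funext i
      simp only [Pi.add_apply, Pi.smul_apply, smul_eq_mul, hB2app]
      have h5 : ∀ x a b c e : ZMod 2, x = x + a * b + c * e + b * a + e * c := by decide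
      exact h5 _ _ _ _ _
    -- column space relations
    have hKB : colSpace B2 ≤ colSpace B := by
      refine span_le.2 ?_
      rintro _ ⟨w, rfl⟩
      show (fun i => B2 i w) ∈ colSpace B
      rw [colrel2 w]
      exact add_mem (add_mem (col_mem_colSpace B w) (smul_mem _ _ pmem)) (smul_mem _ _ qmem)
    have hpq : span (ZMod 2) {p, q} ≤ colSpace B := by
      refine span_le.2 ?_
      rintro x hx
      rcases hx with rfl | rfl
      · exact pmem
      · exact qmem
    have hBK : colSpace B ≤ colSpace B2 ⊔ span (ZMod 2) {p, q} := by
      refine span_le.2 ?_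
      rintro _ ⟨w, rfl⟩
      show (fun i => B i w) ∈ colSpace B2 ⊔ span (ZMod 2) {p, q}
      rw [colrel w]
      refine add_mem (add_mem (mem_sup_left (col_mem_colSpace B2 w)) ?_) ?_
      · exact smul_mem _ _ (mem_sup_right (subset_span (by simp)))
      · exact smul_mem _ _ (mem_sup_right (subset_span (by simp)))
    have colEq : colSpace B = colSpace B2 ⊔ span (ZMod 2) {p, q} :=
      le_antisymm hBK (sup_le hKB hpq)
    -- coordinate vanishing on colSpace B2
    have vany : ∀ v ∈ colSpace B2, v y = 0 := by
      intro v hv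
      have : colSpace B2 ≤ LinearMap.ker (LinearMap.proj (R := ZMod 2) (φ := fun _ : V => ZMod 2) y) := by
        refine span_le.2 ?_
        rintro _ ⟨w, rfl⟩
        simp only [SetLike.mem_coe, LinearMap.mem_ker, LinearMap.proj_apply]
        exact rowy w
      simpa using this hv
    have vanz : ∀ v ∈ colSpace B2, v z = 0 := by
      intro v hv
      have : colSpace B2 ≤ LinearMap.ker (LinearMap.proj (R := ZMod 2) (φ := fun _ : V => ZMod 2) z) := by
        refine span_le.2 ?_
        rintro _ ⟨w, rfl⟩
        simp only [SetLike.mem_coe, LinearMap.mem_ker, LinearMap.proj_apply]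
        exact rowz w
      simpa using this hv
    have pne : p ≠ 0 := by intro h; rw [h] at pz; simp at pz
    have qne : q ≠ 0 := by intro h; rw [h] at qy; simp at qy
    set K := colSpace B2 with hK
    set r := Module.finrank (ZMod 2) K with hr
    -- step 1 : finrank (K ⊔ span {p}) = r + 1
    have pnotK : p ∉ K := fun h => by rw [vanz p h] at pz; exact absurd pz.symm (by decide)
    have hlt1 : K < K ⊔ span (ZMod 2) {p} :=
      lt_of_le_of_ne le_sup_left (fun h => pnotK (h ▸ mem_sup_right (subset_span rfl)))
    have hub1 : Module.finrank (ZMod 2) ↥(K ⊔ span (ZMod 2) {p}) ≤ r + 1 := by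
      have := Submodule.finrank_add_le_finrank_add_finrank K (span (ZMod 2) {p})
      rwa [finrank_span_singleton pne] at this
    have hstep1 : Module.finrank (ZMod 2) ↥(K ⊔ span (ZMod 2) {p}) = r + 1 :=
      le_antisymm hub1 (Nat.succ_le_of_lt (Submodule.finrank_lt_finrank_of_lt hlt1))
    -- step 2
    have qnotK1 : q ∉ K ⊔ span (ZMod 2) {p} := by
      intro hqmem
      rcases Submodule.mem_sup.1 hqmem with ⟨k, hk, c, hc, hkc⟩
      rcases Submodule.mem_span_singleton.1 hc with ⟨t, rfl⟩
      have : q y = k y + t * p y := by rw [← hkc]; simp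
      rw [vany k hk, py, qy] at this
      simp at this
    have hlt2 : K ⊔ span (ZMod 2) {p} < (K ⊔ span (ZMod 2) {p}) ⊔ span (ZMod 2) {q} :=
      lt_of_le_of_ne le_sup_left (fun h => qnotK1 (h ▸ mem_sup_right (subset_span rfl)))
    have hub2 : Module.finrank (ZMod 2) ↥((K ⊔ span (ZMod 2) {p}) ⊔ span (ZMod 2) {q}) ≤ r + 2 := by
      have := Submodule.finrank_add_le_finrank_add_finrank (K ⊔ span (ZMod 2) {p}) (span (ZMod 2) {q})
      rwa [finrank_span_singleton qne, hstep1] at this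
    have hstep2 : Module.finrank (ZMod 2) ↥((K ⊔ span (ZMod 2) {p}) ⊔ span (ZMod 2) {q}) = r + 2 :=
      le_antisymm hub2 (by
        have := Submodule.finrank_lt_finrank_of_lt hlt2
        omega)
    have hspan2 : span (ZMod 2) ({p, q} : Set (V → ZMod 2)) = span (ZMod 2) {p} ⊔ span (ZMod 2) {q} := by
      rw [← Submodule.span_union]
      congr 1
    have hrB : Module.finrank (ZMod 2) (colSpace B) = r + 2 := by
      rw [colEq, hspan2, ← sup_assoc]
      exact hstep2
    -- recursion
    have hrd : r < d := by omega
    obtain ⟨heven2, hdec2⟩ := ih r hrd B2 le_rfl hsym2 hdiag2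
    rw [← hr] at heven2 hdec2
    constructor
    · rw [hrB]
      rcases heven2 with ⟨m, hm⟩
      exact ⟨m + 1, by omega⟩
    · intro a
      obtain ⟨t2, ht2card, ht2⟩ := hdec2 (a + q)
      refine ⟨(a + p + q) ::ₘ (a + p) ::ₘ t2, ?_, ?_⟩
      · simp only [Multiset.card_cons]
        rw [hrB]
        omega
        -- card t2 + 2 ≤ r + 1 + 2 = finrank B + 1
      · rw [S_cons, S_cons, ← ht2]
        ext i j
        simp only [Matrix.add_apply, vecMulVec_apply, Pi.add_apply, hB2app]
        have h7 : ∀ x1 x2 x3 x4 x5 x6 x7 : ZMod 2,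
            x1 * x2 + x7 =
              (x1 + x3 + x5) * (x2 + x4 + x6) +
                ((x1 + x3) * (x2 + x4) + ((x1 + x5) * (x2 + x6) + (x7 + x3 * x6 + x5 * x4))) := by
          decide
        exact h7 (a i) (a j) (p i) (p j) (q i) (q j) (B i j)

end Main
section Final
variable {V : Type*} [Fintype V] [DecidableEq V]

lemma even_iff_cast (n : ℕ) : Even n ↔ (n : ZMod 2) = 0 := by
  rw [Nat.even_iff, ← ZMod.natCast_mod]
  rcases Nat.mod_two_eq_zero_or_one n with h | h <;> simp [h]

theorem stmt10' (G : SimpleGraph V)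
    (heven : Even (c2 G)) (hpos : 0 < c2 G)
    (𝒞 : Multiset (Finset V)) (h𝒞 : IsSCS G 𝒞) (hcard : Multiset.card 𝒞 = c2 G) :
    ∃ v : V, Odd (Multiset.card (𝒞.filter (fun C => v ∈ C))) := by
  by_contra hcon
  push_neg at hcon
  classical
  set k := Multiset.card 𝒞 with hk
  set χ : Finset V → (V → ZMod 2) := fun C v => if v ∈ C then 1 else 0 with hχ
  set m : Multiset (V → ZMod 2) := 𝒞.map χ with hm
  set A : Matrix V V (ZMod 2) := S m with hA
  have hApp : ∀ i j, A i j = (𝒞.map fun C => χ C i * χ C j).sum := by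
    intro i j
    rw [hA, S_apply, hm, Multiset.map_map]
    rfl
  have hent : ∀ i j : V,
      A i j = ((Multiset.card (𝒞.filter fun C => i ∈ C ∧ j ∈ C) : ZMod 2)) := by
    intro i j
    rw [hApp, card_filter_cast]
    apply congrArg
    apply Multiset.map_congr rfl
    intro C _
    by_cases h1 : i ∈ C <;> by_cases h2 : j ∈ C <;> simp [hχ, h1, h2]
  have hsym : ∀ i j, A i j = A j i := by
    intro i j
    rw [hApp, hApp]
    apply congrArg
    apply Multiset.map_congr rfl
    intro C _
    exact mul_comm _ _
  have hdiagcard : ∀ v : V, ((Multiset.card (𝒞.filter fun C => v ∈ C) : ZMod 2)) = 0 := by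
    intro v
    rw [← even_iff_cast]
    simpa using hcon v
  have hdiag : ∀ i, A i i = 0 := by
    intro i
    rw [hent]
    have hfe : (𝒞.filter fun C => i ∈ C ∧ i ∈ C) = 𝒞.filter fun C => i ∈ C :=
      Multiset.filter_congr (fun C _ => by tauto)
    rw [hfe]
    exact hdiagcard i
  -- sum of all vectors is zero
  have hsum0 : m.sum = 0 := by
    funext v
    rw [multiset_sum_apply, hm, Multiset.map_map]
    have : (𝒞.map fun C => χ C v).sum = ((Multiset.card (𝒞.filter fun C => v ∈ C) : ZMod 2)) := by
      rw [card_filter_cast]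
    rw [show ((𝒞.map (Function.comp (fun w => w v) χ)).sum) = (𝒞.map fun C => χ C v).sum from rfl,
      this, hdiagcard v]
    rfl
  have hk1 : 1 ≤ k := by omega
  have hm0 : m ≠ 0 := by
    intro h
    have : Multiset.card m = 0 := by rw [h]; rfl
    rw [hm, Multiset.card_map, ← hk] at this
    omega
  obtain ⟨a, ham⟩ := Multiset.exists_mem_of_ne_zero hm0
  set m' : Multiset (V → ZMod 2) := m.erase a with hm'
  have hcons : a ::ₘ m' = m := Multiset.cons_erase ham
  have hcard' : Multiset.card m' = k - 1 := by
    rw [hm', Multiset.card_erase_of_mem ham, hm, Multiset.card_map, ← hk, Nat.pred_eq_sub_one]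
  have hasum : a = m'.sum := by
    have h0 : a + m'.sum = 0 := by rw [← Multiset.sum_cons, hcons, hsum0]
    funext v
    have h0v : a v + m'.sum v = 0 := by
      have := congrFun h0 v
      simpa using this
    have : ∀ x y : ZMod 2, x + y = 0 → x = y := by decide
    exact this _ _ h0v
  -- column space bound
  set U : Submodule (ZMod 2) (V → ZMod 2) := Submodule.span (ZMod 2) {x | x ∈ m'} with hU
  have hamem : a ∈ U := hasum ▸ multiset_sum_mem m' (fun x hx => Submodule.subset_span hx)
  have hmU : Submodule.span (ZMod 2) {x | x ∈ m} ≤ U := by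
    rw [← hcons]
    refine Submodule.span_le.2 ?_
    intro x hx
    rcases Multiset.mem_cons.1 hx with rfl | hx'
    · exact hamem
    · exact Submodule.subset_span hx'
  have hAU : colSpace A ≤ U := by
    refine le_trans (Submodule.span_le.2 ?_) hmU
    rintro _ ⟨v, rfl⟩
    show (fun i => A i v) ∈ Submodule.span (ZMod 2) {x | x ∈ m}
    have hcol : (fun i => A i v) = (m.map fun w => w v • w).sum := by
      funext i
      rw [multiset_sum_apply, Multiset.map_map]
      rw [hA, S_apply]
      apply congrArg
      apply Multiset.map_congr rfl
      intro w _
      simp [mul_comm]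
    rw [hcol]
    refine multiset_sum_mem _ ?_
    intro x hx
    rcases Multiset.mem_map.1 hx with ⟨w, hw, rfl⟩
    exact Submodule.smul_mem _ _ (Submodule.subset_span hw)
  have hUrank : Module.finrank (ZMod 2) U ≤ k - 1 := by
    have h1 : {x | x ∈ m'} = (↑m'.toFinset : Set (V → ZMod 2)) := by
      ext x; simp
    rw [hU, h1]
    calc Module.finrank (ZMod 2) (Submodule.span (ZMod 2) (↑m'.toFinset : Set (V → ZMod 2)))
        ≤ m'.toFinset.card := finrank_span_finset_le_card _
      _ ≤ Multiset.card m' := Multiset.toFinset_card_le _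
      _ = k - 1 := hcard'
  have hrle : Module.finrank (ZMod 2) (colSpace A) ≤ k - 1 :=
    le_trans (Submodule.finrank_mono hAU) hUrank
  -- apply the decomposition
  obtain ⟨hEvenr, hdec⟩ := alt_decomp (Module.finrank (ZMod 2) (colSpace A)) A le_rfl hsym hdiag
  obtain ⟨t, htcard, htA⟩ := hdec 0
  have hAt : A = S t := by
    rw [← htA]
    ext i j
    simp [vecMulVec_apply]
  have hkeven : Even k := by rw [hcard]; exact heven
  have htle : Multiset.card t ≤ k - 1 := by
    rw [Nat.even_iff] at hEvenr hkeven
    omega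
  -- build the smaller SCS
  set 𝒞' : Multiset (Finset V) := t.map (fun w => Finset.univ.filter fun v => w v = 1) with h𝒞'
  have hent' : ∀ i j : V,
      ((Multiset.card (𝒞'.filter fun C => i ∈ C ∧ j ∈ C) : ZMod 2)) = A i j := by
    intro i j
    rw [card_filter_cast, h𝒞', Multiset.map_map, hAt, S_apply]
    apply congrArg
    apply Multiset.map_congr rfl
    intro w _
    simp only [Function.comp_apply, Finset.mem_filter, Finset.mem_univ, true_and]
    have : ∀ x y : ZMod 2, (if x = 1 ∧ y = 1 then (1 : ZMod 2) else 0) = x * y := by decide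
    exact this _ _
  have hSCS' : IsSCS G 𝒞' := by
    intro u v huv
    rw [h𝒞 u v huv, odd_iff_cast, odd_iff_cast, hent', hent]
  have hle : c2 G ≤ Multiset.card 𝒞' := Nat.sInf_le ⟨𝒞', hSCS', rfl⟩
  have hcard'' : Multiset.card 𝒞' = Multiset.card t := by rw [h𝒞', Multiset.card_map]
  omega

end Final

theorem stmt10 {V : Type*} [Fintype V] [DecidableEq V] (G : SimpleGraph V)
    (heven : Even (c2 G)) (hpos : 0 < c2 G)
    (𝒞 : Multiset (Finset V)) (h𝒞 : IsSCS G 𝒞) (hcard : Multiset.card 𝒞 = c2 G) :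
    ∃ v : V, Odd (Multiset.card (𝒞.filter (fun C => v ∈ C))) :=
  stmt10' G heven hpos 𝒞 h𝒞 hcard
end
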